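/- arXiv:1505.08145 — 11 statements merged into one kernel-verified Lean document; each statement's English description precedes it below -/
import Mathlib

section
/- Let f be a positive semidefinite form in n variables of degree 2d that is not a sum of squares of forms, and let p be an irreducible indefinite form of degree r in ℝ[x₁,...,xₙ]. Then p²·f is a positive semidefinite form of degree 2d+2r that is not a sum of squares of forms. -/
/-!
If `p ^ 2 * f = ∑ hₜ ^ 2`, every `hₜ` vanishes on the real zero set of `p`. An irreducible
indefinite `p` divides every polynomial vanishing there: a generic zigzag between a negative and
a positive point of `p` yields a sign change of `p` along a coordinate line, which persists on an
open set of parallel lines. If `p ∤ h`, viewing both as polynomials in that coordinate gives a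
Bezout identity `A p + B h = c` with `c ≠ 0` in the remaining variables, and evaluating it at the
real root of `p` on each of these lines makes `c` vanish on an open set, which is impossible.
Hence `hₜ = p gₜ`, and cancelling `p ^ 2` writes `f` as the sum of squares `∑ gₜ ^ 2` of forms of
degree `d`.
-/

open MvPolynomial

theorem Polynomial.exists_mul_add_mul_eq_C_of_not_dvd {R : Type*} [CommRing R] [IsDomain R]
    [IsGCDMonoid R] {p q : Polynomial R} (hp : Irreducible p) (hdeg : p.natDegree ≠ 0)
    (hpq : ¬p ∣ q) : ∃ (a b : Polynomial R) (c : R), c ≠ 0 ∧ p * a + q * b = C c := by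
  let φ := algebraMap R (FractionRing R)
  have hφ : Function.Injective φ := IsFractionRing.injective R _
  have hprim := hp.isPrimitive hdeg
  have hcop : IsCoprime (p.map φ) (q.map φ) :=
    ((hprim.irreducible_iff_irreducible_map_fraction_map).mp hp).coprime_iff_not_dvd.mpr
      fun h => hpq (hprim.dvd_of_fraction_map_dvd_fraction_map h)
  obtain ⟨a, b, -, -, hab⟩ := exists_mul_add_mul_eq_C_resultant p q le_rfl le_rfl (.inl hdeg)
  refine ⟨a, b, _, fun h0 => resultant_ne_zero _ _ hcop ?_, hab⟩
  rw [natDegree_map_eq_of_injective hφ, natDegree_map_eq_of_injective hφ, resultant_map_map, h0,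
    map_zero]

namespace MvPolynomial

theorem exists_mem_eval_ne_zero_of_isOpen {σ : Type*} [Fintype σ] {q : MvPolynomial σ ℝ}
    (hq : q ≠ 0) {U : Set (σ → ℝ)} (hU : IsOpen U) (hne : U.Nonempty) :
    ∃ x ∈ U, eval x q ≠ 0 := by
  by_contra! h
  obtain ⟨x, hx⟩ := hne
  obtain ⟨ε, hε, hball⟩ := Metric.isOpen_iff.mp hU x hx
  refine hq (funext_set (fun i => Metric.ball (x i) ε) (fun i => ?_) fun y hy => ?_)
  · rw [Real.ball_eq_Ioo]
    exact Set.Ioo_infinite (by linarith)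
  · rw [map_zero]
    exact h y (hball (by rwa [ball_pi x hε]))

theorem exists_eval_neg_and_eval_update_pos {n : ℕ} {p : MvPolynomial (Fin n) ℝ}
    {a b : Fin n → ℝ} (ha : eval a p < 0) (hb : 0 < eval b p) :
    ∃ (x : Fin n → ℝ) (j : Fin n) (t : ℝ),
      eval x p < 0 ∧ 0 < eval (Function.update x j t) p := by
  have hp : p ≠ 0 := by rintro rfl; simp at hb
  -- At a point `z` with `eval z Q ≠ 0` none of the zigzag values `eval (z ∘ mix k) p` vanishes,
  -- so the sign switches strictly between two consecutive ones.
  let mix (k : ℕ) (i : Fin n) : Fin n ⊕ Fin n := if (i : ℕ) < k then .inl i else .inr i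
  have mix_injective (k : ℕ) : Function.Injective (mix k) := by
    intro i i' h
    simp only [mix] at h
    split_ifs at h <;> simpa using h
  have mix_of_le {k : ℕ} (hk : n ≤ k) : mix k = .inl := by
    funext i
    simp [mix, i.2.trans_le hk]
  let Q := ∏ k ∈ Finset.range (n + 1), rename (mix k) p
  have hQ : Q ≠ 0 := Finset.prod_ne_zero_iff.mpr fun k _ => by
    rwa [Ne, ← map_zero (rename (mix k)), (rename_injective _ (mix_injective k)).eq_iff]
  let U : Set (Fin n ⊕ Fin n → ℝ) := {z | eval (z ∘ .inr) p < 0 ∧ 0 < eval (z ∘ .inl) p}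
  have hU : IsOpen U :=
    (isOpen_lt ((continuous_eval p).comp (by fun_prop)) continuous_const).inter
      (isOpen_lt continuous_const ((continuous_eval p).comp (by fun_prop)))
  obtain ⟨z, ⟨hz0, hzn⟩, hzQ⟩ :=
    exists_mem_eval_ne_zero_of_isOpen hQ hU ⟨Sum.elim b a, ha, hb⟩
  let v (k : ℕ) : ℝ := eval (z ∘ mix k) p
  obtain ⟨k, hk, hk1⟩ := Nat.exists_not_and_succ_of_not_zero_of_exists (p := fun k => 0 < v k)
    (fun h => by simp only [v, mix, Nat.not_lt_zero, if_false] at h; exact h.not_gt hz0)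
    ⟨n, by simpa only [v, mix_of_le le_rfl] using hzn⟩
  have hkn : k < n := by
    by_contra! hnk
    exact hk (by simpa only [v, mix_of_le hnk] using hzn)
  have hvk : v k ≠ 0 := by
    simp only [Q, map_prod, eval_rename, Finset.prod_ne_zero_iff] at hzQ
    exact hzQ k (Finset.mem_range.mpr (by omega))
  have hstep :
      Function.update (z ∘ mix k) ⟨k, hkn⟩ (z (.inl ⟨k, hkn⟩)) = z ∘ mix (k + 1) := by
    funext i
    rcases eq_or_ne i ⟨k, hkn⟩ with rfl | hi
    · simp [mix]
    · have : (i : ℕ) ≠ k := fun h => hi (Fin.ext h)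
      simp only [Function.update_of_ne hi, Function.comp_apply, mix]
      congr 1
      split_ifs <;> first | rfl | omega
  exact ⟨z ∘ mix k, ⟨k, hkn⟩, z (.inl ⟨k, hkn⟩), lt_of_le_of_ne (not_lt.mp hk) hvk,
    by rwa [hstep]⟩

theorem dvd_of_zeros_subset_of_sign_change_cons {m : ℕ}
    {p h : MvPolynomial (Fin (m + 1)) ℝ}
    (hp : Irreducible p) {u₀ : Fin m → ℝ} {s t : ℝ}
    (hs : eval (Fin.cons s u₀) p < 0) (ht : 0 < eval (Fin.cons t u₀) p)
    (hvan : ∀ x, eval x p = 0 → eval x h = 0) : p ∣ h := by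
  by_contra hph
  have hdeg : (finSuccEquiv ℝ m p).natDegree ≠ 0 := by
    intro h0
    obtain ⟨c, hc⟩ := Polynomial.natDegree_eq_zero.mp h0
    simp only [eval_eq_eval_mv_eval', ← hc, Polynomial.map_C, Polynomial.eval_C] at hs ht
    exact hs.not_gt ht
  obtain ⟨A, B, c, hc, hABc⟩ := Polynomial.exists_mul_add_mul_eq_C_of_not_dvd
    (hp.map (finSuccEquiv ℝ m)) hdeg (q := finSuccEquiv ℝ m h)
    fun hd => hph (by simpa using map_dvd (finSuccEquiv ℝ m).symm hd)
  let U : Set (Fin m → ℝ) := {u | eval (Fin.cons s u) p < 0 ∧ 0 < eval (Fin.cons t u) p}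
  have hU : IsOpen U :=
    (isOpen_lt ((continuous_eval p).comp (by fun_prop)) continuous_const).inter
      (isOpen_lt continuous_const ((continuous_eval p).comp (by fun_prop)))
  obtain ⟨u, ⟨hsu, htu⟩, hcu⟩ := exists_mem_eval_ne_zero_of_isOpen hc hU ⟨u₀, hs, ht⟩
  obtain ⟨r, -, hr⟩ := intermediate_value_uIcc (a := s) (b := t)
    (f := fun r => eval (Fin.cons r u : Fin (m + 1) → ℝ) p)
    ((continuous_eval p).comp (by fun_prop)).continuousOn
    (Set.mem_uIcc.mpr (.inl ⟨hsu.le, htu.le⟩))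
  apply hcu
  -- evaluate the Bezout identity at the root `(r, u)` of `p`
  have := congrArg (fun F => Polynomial.eval r (Polynomial.map (eval u) F)) hABc
  simp only [Polynomial.map_add, Polynomial.map_mul, Polynomial.eval_add, Polynomial.eval_mul,
    ← eval_eq_eval_mv_eval', Polynomial.map_C, Polynomial.eval_C] at this
  simpa [hr, hvan _ hr] using this.symm

theorem dvd_of_zeros_subset_of_sign_change_update {m : ℕ}
    {p h : MvPolynomial (Fin (m + 1)) ℝ}
    (hp : Irreducible p) {x : Fin (m + 1) → ℝ} {j : Fin (m + 1)} {t : ℝ}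
    (hx : eval x p < 0) (hxt : 0 < eval (Function.update x j t) p)
    (hvan : ∀ x, eval x p = 0 → eval x h = 0) : p ∣ h := by
  let τ := Equiv.swap 0 j
  have hττ : (τ : Fin (m + 1) → Fin (m + 1)) ∘ τ = id := by
    rw [← Equiv.Perm.coe_mul, Equiv.swap_mul_self, Equiv.Perm.coe_one]
  have hx0 : x j = (x ∘ τ) 0 := by simp [τ]
  have key : rename τ p ∣ rename τ h := by
    refine dvd_of_zeros_subset_of_sign_change_cons (hp.map (renameEquiv ℝ τ))
      (u₀ := Fin.tail (x ∘ τ)) (s := x j) (t := t) ?_ ?_ fun y hy => ?_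
    · rwa [eval_rename, hx0, Fin.cons_self_tail, Function.comp_assoc, hττ, Function.comp_id]
    · rwa [eval_rename, ← Fin.update_cons_zero (x := x j), hx0, Fin.cons_self_tail,
        Function.update_comp_equiv, Function.comp_assoc, hττ, Function.comp_id,
        show τ.symm 0 = j by simp [τ]]
    · rw [eval_rename] at hy ⊢
      exact hvan _ hy
  simpa only [rename_rename, hττ, rename_id_apply] using map_dvd (rename τ) key

theorem dvd_of_zeros_subset_of_indefinite {n : ℕ} {p h : MvPolynomial (Fin n) ℝ}
    (hp : Irreducible p) {a b : Fin n → ℝ} (ha : eval a p < 0) (hb : 0 < eval b p)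
    (hvan : ∀ x, eval x p = 0 → eval x h = 0) : p ∣ h := by
  obtain ⟨x, j, t, hx, hxt⟩ := exists_eval_neg_and_eval_update_pos ha hb
  cases n with
  | zero => exact j.elim0
  | succ m => exact dvd_of_zeros_subset_of_sign_change_update hp hx hxt hvan

attribute [local instance] MvPolynomial.gradedAlgebra in
theorem IsHomogeneous.homogeneousComponent_add_mul {σ R : Type*} [CommSemiring R]
    {p : MvPolynomial σ R} {r : ℕ} (hp : p.IsHomogeneous r) (g : MvPolynomial σ R) (i : ℕ) :
    homogeneousComponent (r + i) (p * g) = p * homogeneousComponent i g := by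
  rw [← decomposition.decompose'_apply, ← decomposition.decompose'_apply]
  exact DirectSum.coe_decompose_mul_add_of_left_mem _ ((mem_homogeneousSubmodule _ _).mpr hp)

theorem IsHomogeneous.of_mul_left {σ R : Type*} [CommRing R] [IsDomain R]
    {p g : MvPolynomial σ R} {r d : ℕ} (hp : p.IsHomogeneous r) (hp0 : p ≠ 0)
    (hpg : (p * g).IsHomogeneous (r + d)) :
    g.IsHomogeneous d := by
  intro m hm
  rw [Pi.one_def, ← Finsupp.degree_eq_weight_one]
  by_contra hdeg
  have hcomp : homogeneousComponent m.degree g = 0 := by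
    have := hp.homogeneousComponent_add_mul g m.degree
    rw [homogeneousComponent_of_mem hpg, if_neg (by omega)] at this
    exact (mul_eq_zero.mp this.symm).resolve_left hp0
  apply hm
  simpa [coeff_homogeneousComponent] using congrArg (coeff m) hcomp

theorem exists_sum_sq_of_sq_mul_eq_sum_sq {n d r : ℕ} {ι : Type*} [Fintype ι]
    {f p : MvPolynomial (Fin n) ℝ} {h : ι → MvPolynomial (Fin n) ℝ}
    (hphom : p.IsHomogeneous r) (hpirr : Irreducible p) {a b : Fin n → ℝ}
    (ha : eval a p < 0) (hb : 0 < eval b p) (hhom : ∀ t, (h t).IsHomogeneous (r + d))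
    (heq : p ^ 2 * f = ∑ t, h t ^ 2) :
    ∃ g : ι → MvPolynomial (Fin n) ℝ, (∀ t, (g t).IsHomogeneous d) ∧ f = ∑ t, g t ^ 2 := by
  have hp0 : p ≠ 0 := by rintro rfl; simp at hb
  have hvan (t : ι) (x : Fin n → ℝ) (hx : eval x p = 0) : eval x (h t) = 0 := by
    have hsum : ∑ t, eval x (h t) ^ 2 = 0 := by
      simpa [hx] using (congrArg (eval x) heq).symm
    exact pow_eq_zero_iff two_ne_zero |>.mp <|
      (Finset.sum_eq_zero_iff_of_nonneg fun t _ => sq_nonneg _).mp hsum t (Finset.mem_univ t)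
  choose g hg using fun t => dvd_of_zeros_subset_of_indefinite hpirr ha hb (hvan t)
  refine ⟨g, fun t => hphom.of_mul_left hp0 (hg t ▸ hhom t),
    mul_left_cancel₀ (pow_ne_zero 2 hp0) ?_⟩
  simp_rw [heq, Finset.mul_sum, hg, mul_pow]

end MvPolynomial

/-- If `f` is a psd form of degree 2d that is not a sum of squares of forms, and `p` is an
irreducible indefinite form of degree `r`, then `p^2 * f` is a psd form of degree `2d + 2r`
that is not a sum of squares of forms. -/
theorem stmt0 (n d r : ℕ) (f p : MvPolynomial (Fin n) ℝ)
    (hfhom : f.IsHomogeneous (2 * d))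
    (hfpsd : ∀ x : Fin n → ℝ, 0 ≤ eval x f)
    (hfnotsos : ¬ ∃ (k : ℕ) (h : Fin k → MvPolynomial (Fin n) ℝ),
      (∀ t, (h t).IsHomogeneous d) ∧ f = ∑ t, (h t) ^ 2)
    (hphom : p.IsHomogeneous r)
    (hpirr : Irreducible p)
    (hpindef : (∃ a : Fin n → ℝ, eval a p < 0) ∧ (∃ b : Fin n → ℝ, 0 < eval b p)) :
    (p ^ 2 * f).IsHomogeneous (2 * d + 2 * r) ∧
    (∀ x : Fin n → ℝ, 0 ≤ eval x (p ^ 2 * f)) ∧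
    ¬ ∃ (k : ℕ) (h : Fin k → MvPolynomial (Fin n) ℝ),
      (∀ t, (h t).IsHomogeneous (d + r)) ∧ p ^ 2 * f = ∑ t, (h t) ^ 2 := by
  obtain ⟨⟨a, ha⟩, ⟨b, hb⟩⟩ := hpindef
  refine ⟨?_, fun x => ?_, fun ⟨k, h, hhom, heq⟩ => hfnotsos ⟨k, ?_⟩⟩
  · convert (hphom.pow 2).mul hfhom using 1
    ring
  · rw [map_mul, map_pow]
    exact mul_nonneg (sq_nonneg _) (hfpsd x)
  · exact exists_sum_sq_of_sq_mul_eq_sum_sq hphom hpirr ha hb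
      (fun t => add_comm d r ▸ hhom t) heq
end

section
/- If f is a positive semidefinite symmetric form in n variables that is not a sum of squares, then for every i ≥ 0 the form (x₁ + ... + xₙ)^{2i} · f is a positive semidefinite symmetric form that is not a sum of squares. -/
open MvPolynomial

private lemma X_dvd_of_vanish {n : ℕ} (i : Fin n) (g : MvPolynomial (Fin n) ℝ)
    (hg : ∀ x : Fin n → ℝ, x i = 0 → eval x g = 0) : X i ∣ g := by
  classical
  set v : Fin n → MvPolynomial (Fin n) ℝ := fun j => if j = i then 0 else X j with hv
  have hρ : aeval v g = 0 := by
    apply MvPolynomial.funext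
    intro x
    rw [map_zero]
    have e1 : ∀ (y : Fin n → ℝ) (p : MvPolynomial (Fin n) ℝ), aeval y p = eval y p := by
      intro y p
      rw [aeval_def, Algebra.algebraMap_self]
      rfl
    have h0 := comp_aeval_apply (R := ℝ) (f := v) (aeval x : MvPolynomial (Fin n) ℝ →ₐ[ℝ] ℝ) g
    rw [e1 x (aeval v g)] at h0
    rw [h0]
    simp only [e1 x]
    rw [e1]
    apply hg
    simp [hv]
  have key : ∀ m : Fin n →₀ ℕ, m i = 0 → coeff m (aeval v g) = coeff m g := by
    intro m hm
    conv_lhs => rw [g.as_sum]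
    conv_rhs => rw [g.as_sum]
    rw [map_sum]
    rw [MvPolynomial.coeff_sum, MvPolynomial.coeff_sum]
    apply Finset.sum_congr rfl
    intro m' _
    by_cases hm' : m' i = 0
    · congr 1
      rw [aeval_monomial]
      have : (m'.prod fun j k => v j ^ k) = m'.prod fun j k => X j ^ k := by
        apply Finsupp.prod_congr
        intro j hj
        have : j ≠ i := fun h => by
          subst h; exact (Finsupp.mem_support_iff.mp hj) hm'
        simp [hv, this]
      rw [this, monomial_eq]
      simp [algebraMap_eq]
    · have hne : m' ≠ m := fun h => by subst h; exact hm' hm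
      rw [aeval_monomial]
      have hzero : (m'.prod fun j k => v j ^ k) = 0 := by
        apply Finset.prod_eq_zero (Finsupp.mem_support_iff.mpr hm')
        simp [hv, zero_pow hm']
      rw [hzero, mul_zero, coeff_zero, coeff_monomial, if_neg hne]
  have hcoeff : ∀ m : Fin n →₀ ℕ, m i = 0 → coeff m g = 0 := by
    intro m hm
    rw [← key m hm, hρ, coeff_zero]
  rw [X_dvd_iff_modMonomial_eq_zero]
  ext m
  by_cases h : Finsupp.single i 1 ≤ m
  · rw [coeff_modMonomial_of_le _ h, coeff_zero]
  · rw [coeff_modMonomial_of_not_le _ h, coeff_zero]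
    apply hcoeff
    by_contra hmi
    exact h (by simpa [Finsupp.single_le_iff, Nat.one_le_iff_ne_zero] using hmi)

private lemma sos_of_L2_mul_sos {n : ℕ} (hn : n ≠ 0) (g : MvPolynomial (Fin n) ℝ)
    (hs : ∃ (k : ℕ) (h : Fin k → MvPolynomial (Fin n) ℝ),
      (∑ j : Fin n, X j) ^ 2 * g = ∑ t, (h t) ^ 2) :
    ∃ (k : ℕ) (h : Fin k → MvPolynomial (Fin n) ℝ), g = ∑ t, (h t) ^ 2 := by
  classical
  obtain ⟨k, h, hk⟩ := hs
  have hi : 0 < n := Nat.pos_of_ne_zero hn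
  set i₀ : Fin n := ⟨0, hi⟩
  set S' : MvPolynomial (Fin n) ℝ := ∑ j ∈ Finset.univ.erase i₀, X j with hS'
  set u : Fin n → MvPolynomial (Fin n) ℝ := fun j => if j = i₀ then X i₀ - S' else X j with hu
  set w : Fin n → MvPolynomial (Fin n) ℝ := fun j => if j = i₀ then X i₀ + S' else X j with hw
  set φ : MvPolynomial (Fin n) ℝ →ₐ[ℝ] MvPolynomial (Fin n) ℝ := aeval u with hφ
  set ψ : MvPolynomial (Fin n) ℝ →ₐ[ℝ] MvPolynomial (Fin n) ℝ := aeval w with hψ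
  have hψS' : ψ S' = S' := by
    rw [hS', map_sum]
    apply Finset.sum_congr rfl
    intro j hj
    have : j ≠ i₀ := Finset.ne_of_mem_erase hj
    simp [hψ, hw, this]
  have hψφ : ∀ p, ψ (φ p) = p := by
    intro p
    rw [hφ, comp_aeval_apply]
    have : (fun j => ψ (u j)) = X := by
      funext j
      by_cases hj : j = i₀
      · subst hj
        simp only [hu, if_pos rfl, map_sub]
        rw [hψS']
        simp [hψ, hw]
      · simp [hu, hj, hψ, hw]
    rw [this, aeval_X_left_apply]
  have hφL : φ (∑ j : Fin n, X j) = X i₀ := by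
    have hsum : (∑ j : Fin n, X j : MvPolynomial (Fin n) ℝ) = X i₀ + S' := by
      rw [hS', Finset.add_sum_erase _ _ (Finset.mem_univ i₀)]
    rw [hsum, map_add]
    have hφS' : φ S' = S' := by
      rw [hS', map_sum]
      apply Finset.sum_congr rfl
      intro j hj
      have : j ≠ i₀ := Finset.ne_of_mem_erase hj
      simp [hφ, hu, this]
    rw [hφS']
    simp [hφ, hu]
  have heq : X i₀ ^ 2 * φ g = ∑ t, (φ (h t)) ^ 2 := by
    have := congrArg φ hk
    simpa only [map_mul, map_pow, map_sum, hφL] using this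
  have hdvd : ∀ t, X i₀ ∣ φ (h t) := by
    intro t
    apply X_dvd_of_vanish
    intro x hx
    have h0 : eval x (X i₀ ^ 2 * φ g) = 0 := by
      rw [map_mul, map_pow, eval_X, hx]
      ring
    rw [heq, map_sum] at h0
    simp only [map_pow] at h0
    have hterm : ∀ t' ∈ Finset.univ, (0:ℝ) ≤ eval x (φ (h t')) ^ 2 :=
      fun t' _ => sq_nonneg _
    have := (Finset.sum_eq_zero_iff_of_nonneg hterm).mp h0 t (Finset.mem_univ t)
    exact (pow_eq_zero_iff two_ne_zero).mp this
  choose q hq using hdvd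
  have hg' : φ g = ∑ t, q t ^ 2 := by
    have h2 : X i₀ ^ 2 * φ g = X i₀ ^ 2 * ∑ t, q t ^ 2 := by
      rw [heq, Finset.mul_sum]
      apply Finset.sum_congr rfl
      intro t _
      rw [hq t]
      ring
    exact mul_left_cancel₀ (pow_ne_zero 2 (X_ne_zero i₀)) h2
  refine ⟨k, fun t => ψ (q t), ?_⟩
  calc g = ψ (φ g) := (hψφ g).symm
    _ = ∑ t, (ψ (q t)) ^ 2 := by rw [hg', map_sum]; simp only [map_pow]

private lemma descent {n : ℕ} (hn : n ≠ 0) : ∀ (i : ℕ) (g : MvPolynomial (Fin n) ℝ),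
    (∃ (k : ℕ) (h : Fin k → MvPolynomial (Fin n) ℝ),
      (∑ j : Fin n, X j) ^ (2 * i) * g = ∑ t, (h t) ^ 2) →
    ∃ (k : ℕ) (h : Fin k → MvPolynomial (Fin n) ℝ), g = ∑ t, (h t) ^ 2 := by
  intro i
  induction i with
  | zero => intro g hs; simpa using hs
  | succ i ih =>
    intro g hs
    have hrw : (∑ j : Fin n, X j) ^ (2 * (i + 1)) * g
        = (∑ j : Fin n, X j) ^ (2 * i) * ((∑ j : Fin n, X j) ^ 2 * g) := by
      ring
    rw [hrw] at hs
    exact sos_of_L2_mul_sos hn g (ih _ hs)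

/-- If `f` is a symmetric psd form that is not a sum of squares, then for every `i ≥ 0` the
form `(x₁ + ⋯ + xₙ)^(2i) * f` is a symmetric psd form that is not a sum of squares. -/
theorem stmt1 (n d : ℕ) (f : MvPolynomial (Fin n) ℝ)
    (hfhom : f.IsHomogeneous (2 * d))
    (hfsym : f.IsSymmetric)
    (hfpsd : ∀ x : Fin n → ℝ, 0 ≤ eval x f)
    (hfnotsos : ¬ ∃ (k : ℕ) (h : Fin k → MvPolynomial (Fin n) ℝ), f = ∑ t, (h t) ^ 2) :
    ∀ i : ℕ,
      ((∑ j : Fin n, X j) ^ (2 * i) * f).IsHomogeneous (2 * d + 2 * i) ∧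
      ((∑ j : Fin n, X j) ^ (2 * i) * f).IsSymmetric ∧
      (∀ x : Fin n → ℝ, 0 ≤ eval x ((∑ j : Fin n, X j) ^ (2 * i) * f)) ∧
      ¬ ∃ (k : ℕ) (h : Fin k → MvPolynomial (Fin n) ℝ),
        (∑ j : Fin n, X j) ^ (2 * i) * f = ∑ t, (h t) ^ 2 := by
  intro i
  have hL : (∑ j : Fin n, X j : MvPolynomial (Fin n) ℝ).IsHomogeneous 1 :=
    IsHomogeneous.sum _ _ _ (fun j _ => isHomogeneous_X _ _)
  refine ⟨?_, ?_, ?_, ?_⟩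
  · have := (hL.pow (2 * i)).mul hfhom
    rw [one_mul] at this
    rwa [Nat.add_comm] at this
  · intro e
    rw [map_mul, map_pow, map_sum, hfsym e]
    congr 2
    simp only [rename_X]
    exact Equiv.sum_comp e (fun j => (X j : MvPolynomial (Fin n) ℝ))
  · intro x
    rw [map_mul, map_pow]
    apply mul_nonneg
    · rw [pow_mul]
      exact pow_nonneg (sq_nonneg _) i
    · exact hfpsd x
  · intro hcon
    apply hfnotsos
    by_cases hn : n = 0
    · subst hn
      obtain ⟨c, rfl⟩ := MvPolynomial.C_surjective (Fin 0) f
      have hc : (0:ℝ) ≤ c := by simpa using hfpsd 0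
      refine ⟨1, fun _ => C (Real.sqrt c), ?_⟩
      rw [Fin.sum_univ_one, ← map_pow, Real.sq_sqrt hc]
    · exact descent hn i f hcon
end

section
/- For n ≥ 4 and m = ⌊n/2⌋, if x ∈ ℝⁿ has exactly k coordinates equal to r and n−k coordinates equal to s (r ≠ s, 0 ≤ k ≤ n), then Lₙ(x) = k(n−k)(r−s)⁴·(m−k)(n−m−k), and this value is nonnegative. -/
open Finset

/-! The pairwise power sums of a two-valued point are `k(n−k)(r−s)^p`, so `Lₙ` factors as
`k(n−k)(r−s)⁴ · (m(n−m) − k(n−k)) = k(n−k)(r−s)⁴ (m−k)(n−m−k)`. The last two factors have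
the same sign because no integer lies strictly between `m = ⌊n/2⌋` and `n − m ∈ {m, m+1}`. -/

theorem two_nsmul_sum_sum_Ioi_of_symm {α M : Type*} [LinearOrder α] [Fintype α]
    [LocallyFiniteOrderTop α] [LocallyFiniteOrderBot α] [AddCommMonoid M] {f : α → α → M}
    (hsymm : ∀ i j, f i j = f j i) (hdiag : ∀ i, f i i = 0) :
    2 • ∑ i, ∑ j ∈ Ioi i, f i j = ∑ i, ∑ j, f i j := by
  have hoff : ∑ i, ∑ j ∈ Ioi i, (f j i + f i j) = ∑ i, ∑ j ∈ {i}ᶜ, f j i :=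
    sum_sum_Ioi_add_eq_sum_sum_off_diag f
  simp_rw [hsymm _ (_ : α), ← two_nsmul, ← smul_sum] at hoff
  rw [hoff]
  refine sum_congr rfl fun i _ => ?_
  rw [← add_sum_erase _ _ (mem_univ i), hdiag, zero_add, compl_eq_univ_sdiff,
    sdiff_singleton_eq_erase]

theorem sum_comp_of_two_valued {ι α R : Type*} [Fintype ι] [DecidableEq α] [Ring R]
    {x : ι → α} {r s : α} (hx : ∀ i, x i = r ∨ x i = s) (g : α → R) :
    ∑ i, g (x i) = (#{i | x i = r} : R) * g r + ((Fintype.card ι : R) - #{i | x i = r}) * g s := by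
  have hcard := card_filter_add_card_filter_not (s := univ) (fun i => x i = r)
  rw [card_univ] at hcard
  rw [← sum_filter_add_sum_filter_not univ (fun i => x i = r),
    sum_congr rfl fun i hi => congrArg g (mem_filter.mp hi).2,
    sum_congr rfl fun i hi => congrArg g ((hx i).resolve_left (mem_filter.mp hi).2),
    sum_const, sum_const, nsmul_eq_mul, nsmul_eq_mul, ← hcard]
  push_cast
  rw [add_sub_cancel_left]

theorem sum_sum_Ioi_sub_pow_of_two_valued {ι K : Type*} [LinearOrder ι] [Fintype ι]
    [LocallyFiniteOrderTop ι] [LocallyFiniteOrderBot ι] [Field K] [CharZero K] [DecidableEq K]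
    {x : ι → K} {r s : K} (hx : ∀ i, x i = r ∨ x i = s) {p : ℕ} (hp : Even p) (hp0 : p ≠ 0) :
    ∑ i, ∑ j ∈ Ioi i, (x i - x j) ^ p =
      (#{i | x i = r} : K) * ((Fintype.card ι : K) - #{i | x i = r}) * (r - s) ^ p := by
  have hall := two_nsmul_sum_sum_Ioi_of_symm (f := fun i j => (x i - x j) ^ p)
    (fun i j => by rw [← hp.neg_pow, neg_sub]) (fun i => by simp [hp0])
  have hinner (i : ι) := sum_comp_of_two_valued hx (fun y => (x i - y) ^ p)
  rw [Fintype.sum_congr _ _ hinner, sum_comp_of_two_valued hx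
    (fun z => (#{i | x i = r} : K) * (z - r) ^ p +
      ((Fintype.card ι : K) - #{i | x i = r}) * (z - s) ^ p), nsmul_eq_mul] at hall
  rw [sub_self, sub_self, zero_pow hp0, ← hp.neg_pow (s - r), neg_sub] at hall
  linear_combination hall / 2

theorem sub_mul_sub_nonneg_of_eq_half {R : Type*} [Ring R] [LinearOrder R]
    [IsStrictOrderedRing R]
    {n m : ℕ} (hm : m = n / 2) (k : ℕ) : 0 ≤ ((m : R) - k) * ((n : R) - m - k) := by
  rcases le_or_gt k m with hkm | hmk
  · have hkn : m + k ≤ n := by omega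
    apply mul_nonneg
    · exact sub_nonneg.mpr (by exact_mod_cast hkm)
    · rw [sub_sub, sub_nonneg]; exact_mod_cast hkn
  · have hnk : n ≤ m + k := by omega
    apply mul_nonneg_of_nonpos_of_nonpos
    · exact sub_nonpos.mpr (by exact_mod_cast hmk.le)
    · rw [sub_sub, sub_nonpos]; exact_mod_cast hnk

theorem stmt4_general (n : ℕ) (m : ℕ) (hm : m = n / 2)
    (x : Fin n → ℝ) (r s : ℝ) (k : ℕ)
    (hx : ∀ i, x i = r ∨ x i = s)
    (hk : (univ.filter fun i => x i = r).card = k) :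
    (m * (n - m) : ℝ) * (∑ i : Fin n, ∑ j ∈ Ioi i, (x i - x j) ^ 4) -
        (∑ i : Fin n, ∑ j ∈ Ioi i, (x i - x j) ^ 2) ^ 2 =
      (k : ℝ) * (n - k) * (r - s) ^ 4 * ((m : ℝ) - k) * ((n : ℝ) - m - k) ∧
    0 ≤ (k : ℝ) * (n - k) * (r - s) ^ 4 * ((m : ℝ) - k) * ((n : ℝ) - m - k) := by
  have hkn : k ≤ n := hk ▸ (card_filter_le _ _).trans_eq (card_fin n)
  have hpow (p : ℕ) (hp : Even p) (hp0 : p ≠ 0) :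
      ∑ i : Fin n, ∑ j ∈ Ioi i, (x i - x j) ^ p = (k : ℝ) * (n - k) * (r - s) ^ p := by
    rw [sum_sum_Ioi_sub_pow_of_two_valued hx hp hp0, Fintype.card_fin, ← hk]
  constructor
  · rw [hpow 4 (by decide) (by decide), hpow 2 even_two two_ne_zero]
    ring
  · have hnk : (0 : ℝ) ≤ n - k := sub_nonneg.mpr (by exact_mod_cast hkn)
    have hprod := mul_nonneg (by positivity : (0 : ℝ) ≤ k * (n - k) * (r - s) ^ 4)
      (sub_mul_sub_nonneg_of_eq_half hm k)
    linarith

/-- Closed-form evaluation of `Lₙ` on points with at most two distinct coordinates: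
if `x` has exactly `k` coordinates equal to `r` and the remaining `n − k` equal to `s ≠ r`,
then `Lₙ(x) = k(n−k)(r−s)⁴(m−k)(n−m−k) ≥ 0`, where `m = ⌊n/2⌋`. -/
theorem stmt4 (n : ℕ) (hn : 4 ≤ n) (m : ℕ) (hm : m = n / 2)
    (x : Fin n → ℝ) (r s : ℝ) (hrs : r ≠ s) (k : ℕ)
    (hx : ∀ i, x i = r ∨ x i = s)
    (hk : (univ.filter fun i => x i = r).card = k) :
    (m * (n - m) : ℝ) * (∑ i : Fin n, ∑ j ∈ Ioi i, (x i - x j) ^ 4) -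
        (∑ i : Fin n, ∑ j ∈ Ioi i, (x i - x j) ^ 2) ^ 2 =
      (k : ℝ) * (n - k) * (r - s) ^ 4 * ((m : ℝ) - k) * ((n : ℝ) - m - k) ∧
    0 ≤ (k : ℝ) * (n - k) * (r - s) ^ 4 * ((m : ℝ) - k) * ((n : ℝ) - m - k) :=
  stmt4_general n m hm x r s k hx hk
end

section
/- Let n ≥ 4 and m = ⌊n/2⌋. If h(x₁,...,xₙ) is a real quadratic form that vanishes at every 0/1 point of ℝⁿ having exactly m ones, and at every 0/1 point having exactly m+1 ones, then h is identically zero. -/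
/-!
Write `h(1_S)` for the value of the form at the 0/1 point with support `S`. Inserting a point `k`
into `S` adds `a_k + ∑_{j ∈ S} c_{kj}`, where `c` are the symmetrised off-diagonal coefficients,
so for `|T| = m - 1` and `i, j ∉ T` the second difference of `h` over `T, T+i, T+j, T+i+j` gives
`c_{ij} = h(1_T)`. As `2m ≤ n`, any two `(m-1)`-sets miss a common pair, hence `h(1_T) = γ` does
not depend on `T`, every `c_{ij}` equals `γ`, and one more insertion gives `a_i = -mγ`.
Recomputing `h(1_T)` from these coefficients yields `m(m+1)γ = 0`.
-/

open Finset

namespace ZeroOneLayers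

variable {ι : Type*} [LinearOrder ι] (a : ι → ℝ) (b : ι → ι → ℝ)

/-- The value of `∑ aᵢxᵢ² + ∑_{i<j} bᵢⱼxᵢxⱼ` at the 0/1 point with support `S`. -/
def valueAt (S : Finset ι) : ℝ :=
  ∑ i ∈ S, a i + ∑ i ∈ S, ∑ j ∈ S, if i < j then b i j else 0

def symmCoeff (i j : ι) : ℝ :=
  (if i < j then b i j else 0) + (if j < i then b j i else 0)

variable {a b}

lemma symmCoeff_comm (i j : ι) : symmCoeff b i j = symmCoeff b j i := add_comm _ _

lemma symmCoeff_of_lt {i j : ι} (hij : i < j) : symmCoeff b i j = b i j := by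
  simp [symmCoeff, hij, hij.not_gt]

lemma valueAt_indicator [Fintype ι] [LocallyFiniteOrderTop ι] (S : Finset ι) :
    (∑ i, a i * (if i ∈ S then 1 else 0) ^ 2) +
      ∑ i, ∑ j ∈ Ioi i, b i j * (if i ∈ S then 1 else 0) * (if j ∈ S then 1 else 0) =
    valueAt a b S := by
  simp [valueAt, ← filter_lt_eq_Ioi, mul_ite, ← sum_filter, inter_comm, inter_filter]

lemma valueAt_insert {k : ι} {S : Finset ι} (hk : k ∉ S) :
    valueAt a b (insert k S) = valueAt a b S + a k + ∑ j ∈ S, symmCoeff b k j := by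
  simp only [valueAt, symmCoeff, sum_insert hk, lt_irrefl, if_false, sum_add_distrib]
  ring

lemma symmCoeff_eq_second_difference {i j : ι} {T : Finset ι} (hij : i ≠ j) (hi : i ∉ T)
    (hj : j ∉ T) :
    symmCoeff b i j = valueAt a b (insert j (insert i T)) - valueAt a b (insert i T) -
      valueAt a b (insert j T) + valueAt a b T := by
  have hj' : j ∉ insert i T := by simp [hij.symm, hj]
  rw [valueAt_insert hj', sum_insert hi, valueAt_insert hi, valueAt_insert hj,
    symmCoeff_comm j i]
  ring

lemma two_mul_valueAt_of_const {α γ : ℝ} (ha : ∀ i, a i = α)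
    (hc : ∀ i j, i ≠ j → symmCoeff b i j = γ) (S : Finset ι) :
    2 * valueAt a b S = S.card * (2 * α + (S.card - 1) * γ) := by
  induction S using Finset.induction_on with
  | empty => simp [valueAt]
  | insert k S hk ih =>
    have hrow : ∑ j ∈ S, symmCoeff b k j = S.card * γ := by
      rw [sum_congr rfl fun j hj => hc k j (ne_of_mem_of_not_mem hj hk).symm, sum_const,
        nsmul_eq_mul]
    rw [valueAt_insert hk, card_insert_of_notMem hk, hrow, ha]
    push_cast
    linear_combination ih

lemma exists_card_add_eq_disjoint [Fintype ι] {k : ℕ} (s : Finset ι)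
    (hk : k + s.card ≤ Fintype.card ι) : ∃ T : Finset ι, T.card = k ∧ Disjoint T s := by
  obtain ⟨T, hTs, hT⟩ := exists_subset_card_eq (s := sᶜ) (n := k) (by rw [card_compl]; omega)
  exact ⟨T, hT, subset_compl_iff_disjoint_right.mp hTs⟩

variable (a b) in
def VanishesOnLayers (m : ℕ) : Prop :=
  ∀ S : Finset ι, S.card = m ∨ S.card = m + 1 → valueAt a b S = 0

lemma symmCoeff_eq_valueAt {m : ℕ} (hQ : VanishesOnLayers a b m) {i j : ι} {T : Finset ι}
    (hT : T.card + 1 = m) (hij : i ≠ j) (hi : i ∉ T) (hj : j ∉ T) :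
    symmCoeff b i j = valueAt a b T := by
  have hiT : (insert i T).card = m := by rw [card_insert_of_notMem hi, hT]
  have hjT : (insert j T).card = m := by rw [card_insert_of_notMem hj, hT]
  have hijT : (insert j (insert i T)).card = m + 1 := by
    rw [card_insert_of_notMem (by simp [hij.symm, hj]), hiT]
  rw [symmCoeff_eq_second_difference hij hi hj, hQ _ (.inr hijT), hQ _ (.inl hiT),
    hQ _ (.inl hjT)]
  ring

/-- Since `2m ≤ |ι|`, some pair `i ≠ j` lies outside `T ∪ T'`, and both sets compute its
coefficient. -/
lemma valueAt_eq_of_card_add_one_eq [Fintype ι] {m : ℕ} (hQ : VanishesOnLayers a b m)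
    (hm : 2 * m ≤ Fintype.card ι) {T T' : Finset ι} (hT : T.card + 1 = m)
    (hT' : T'.card + 1 = m) :
    valueAt a b T = valueAt a b T' := by
  have hfree : 1 < (T ∪ T')ᶜ.card := by
    have := card_union_le T T'
    rw [card_compl]; omega
  obtain ⟨i, hi, j, hj, hij⟩ := one_lt_card.mp hfree
  simp only [mem_compl, mem_union, not_or] at hi hj
  rw [← symmCoeff_eq_valueAt hQ hT hij hi.1 hj.1, symmCoeff_eq_valueAt hQ hT' hij hi.2 hj.2]

theorem eq_zero_of_vanishesOnLayers [Fintype ι] {m : ℕ} (hQ : VanishesOnLayers a b m)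
    (hm₁ : 1 ≤ m) (hm : 2 * m ≤ Fintype.card ι) :
    (∀ i, a i = 0) ∧ ∀ i j, i ≠ j → symmCoeff b i j = 0 := by
  obtain ⟨T₀, hT₀, -⟩ :=
    exists_card_add_eq_disjoint (k := m - 1) (∅ : Finset ι) (by simp; omega)
  replace hT₀ : T₀.card + 1 = m := by omega
  set γ := valueAt a b T₀
  have hc : ∀ i j, i ≠ j → symmCoeff b i j = γ := by
    intro i j hij
    obtain ⟨T, hT, hdisj⟩ := exists_card_add_eq_disjoint (k := m - 1) {i, j}
      (by have := card_le_two (a := i) (b := j); omega)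
    simp only [disjoint_insert_right, disjoint_singleton_right] at hdisj
    rw [symmCoeff_eq_valueAt hQ (by omega) hij hdisj.1 hdisj.2,
      valueAt_eq_of_card_add_one_eq hQ hm (by omega) hT₀]
  have ha : ∀ i, a i = -(m * γ) := by
    intro i
    obtain ⟨T, hT, hdisj⟩ := exists_card_add_eq_disjoint (k := m - 1) {i} (by simp; omega)
    have hi : i ∉ T := disjoint_singleton_right.mp hdisj
    have hrow : ∑ j ∈ T, symmCoeff b i j = T.card * γ := by
      rw [sum_congr rfl fun j hj => hc i j (ne_of_mem_of_not_mem hj hi).symm, sum_const,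
        nsmul_eq_mul]
    have hins := valueAt_insert (a := a) (b := b) hi
    rw [hQ _ (.inl (by rw [card_insert_of_notMem hi]; omega)),
      valueAt_eq_of_card_add_one_eq hQ hm (by omega) hT₀, hrow] at hins
    have hTm : (T.card : ℝ) + 1 = m := by exact_mod_cast (show T.card + 1 = m by omega)
    linear_combination -hins - γ * hTm
  -- With `t = |T₀| = m - 1`, the closed form of `valueAt T₀ = γ` is `(t + 1)(t + 2) γ = 0`.
  have hγ : γ = 0 := by
    have hclosed := two_mul_valueAt_of_const ha hc T₀
    have hTm : (T₀.card : ℝ) + 1 = m := by exact_mod_cast hT₀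
    have : ((T₀.card : ℝ) + 1) * ((T₀.card : ℝ) + 2) * γ = 0 := by
      linear_combination hclosed + 2 * T₀.card * γ * hTm
    simpa [(by positivity : ((T₀.card : ℝ) + 1) * ((T₀.card : ℝ) + 2) ≠ 0)] using this
  exact ⟨fun i => by simp [ha i, hγ], fun i j hij => by rw [hc i j hij, hγ]⟩

end ZeroOneLayers

open ZeroOneLayers

/-- If a real quadratic form `h(x) = ∑ aᵢxᵢ² + ∑_{i<j} aᵢⱼxᵢxⱼ` in `n ≥ 4` variables vanishes
at every 0/1 point with exactly `m = ⌊n/2⌋` ones and at every 0/1 point with exactly `m+1`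
ones, then `h` is identically zero. -/
theorem stmt6 (n : ℕ) (hn : 4 ≤ n) (m : ℕ) (hm : m = n / 2)
    (a : Fin n → ℝ) (b : Fin n → Fin n → ℝ)
    (hvan : ∀ x : Fin n → ℝ, (∀ i, x i = 0 ∨ x i = 1) →
      ((univ.filter fun i => x i = 1).card = m ∨
       (univ.filter fun i => x i = 1).card = m + 1) →
      (∑ i : Fin n, a i * x i ^ 2) + ∑ i : Fin n, ∑ j ∈ Ioi i, b i j * x i * x j = 0) :
    (∀ i, a i = 0) ∧ (∀ i j : Fin n, i < j → b i j = 0) := by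
  have hQ : VanishesOnLayers a b m := by
    intro S hS
    rw [← valueAt_indicator]
    refine hvan _ (fun i => by by_cases hi : i ∈ S <;> simp [hi]) ?_
    convert hS using 3 <;> ext <;> simp
  obtain ⟨ha, hc⟩ := eq_zero_of_vanishesOnLayers hQ (by omega) (by simp; omega)
  exact ⟨ha, fun i j hij => symmCoeff_of_lt (b := b) hij ▸ hc i j hij.ne⟩
end

section
/- Under the hypotheses that a quadratic form h = Σᵢ aᵢxᵢ² + Σ_{i<j} a_{ij}xᵢxⱼ vanishes on all 0/1 points with exactly m and exactly m+1 ones (n ≥ 4, m = ⌊n/2⌋), all off-diagonal coefficients a_{ij} (i < j) are equal to a common value u, and every diagonal coefficient satisfies aᵢ = −m·u. -/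
/-!
Write `F(S)` for the value of the form at the indicator of `S`, and `a_{ij}` for the coefficient
of `xᵢxⱼ` in either order. Adding `i ∉ S` to `S` changes `F` by `aᵢ + ∑_{j∈S} a_{ij}`, so the
second difference `F(S∪{i,j}) − F(S∪{i}) − F(S∪{j}) + F(S)` equals `a_{ij}`. For `|S| = m − 1`
its first three terms vanish, so `a_{ij} = F(S)`; taking `S` disjoint from `{i,j,k}` (possible as
`m + 2 ≤ n`) gives `a_{ij} = a_{ik}`, and pairs sharing an index being equal forces all `a_{ij}`
to agree. Finally `0 = F(S∪{k}) − F(S) = aₖ + m·u` for `|S| = m`.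
-/

open Finset

section PairFunction
variable {ι α : Type*}

theorem eq_of_symm_of_star_eq {f : ι → ι → α} (hsymm : ∀ i j, f i j = f j i)
    (hstar : ∀ i j k, j ≠ i → k ≠ i → f i j = f i k) {i j k l : ι} (hij : i ≠ j) (hkl : k ≠ l) :
    f i j = f k l := by
  by_cases hik : i = k
  · subst hik
    exact hstar i j l hij.symm hkl.symm
  · calc f i j = f i k := hstar i j k hij.symm (Ne.symm hik)
      _ = f k i := hsymm i k
      _ = f k l := hstar k i l hik hkl.symm

end PairFunction

theorem Finset.exists_card_eq_disjoint {ι : Type*} [Fintype ι] [DecidableEq ι] {m : ℕ}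
    (T : Finset ι) (h : m + #T ≤ Fintype.card ι) : ∃ S : Finset ι, Disjoint S T ∧ #S = m := by
  obtain ⟨S, hST, hS⟩ := exists_subset_card_eq (s := Tᶜ) (n := m) (by rw [card_compl]; omega)
  exact ⟨S, subset_compl_iff_disjoint_right.1 hST, hS⟩

namespace QuadForm01
variable {ι : Type*} [LinearOrder ι] (a : ι → ℝ) (b : ι → ι → ℝ)

def symmCoeff (i j : ι) : ℝ := b (min i j) (max i j)

def valueOn (S : Finset ι) : ℝ :=
  ∑ i ∈ S, a i + ∑ i ∈ S, ∑ j ∈ S with i < j, b i j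

variable {a b}

theorem symmCoeff_comm (i j : ι) : symmCoeff b i j = symmCoeff b j i := by
  rw [symmCoeff, symmCoeff, min_comm, max_comm]

theorem symmCoeff_of_lt {i j : ι} (h : i < j) : symmCoeff b i j = b i j := by
  rw [symmCoeff, min_eq_left h.le, max_eq_right h.le]

theorem valueOn_insert {S : Finset ι} {i : ι} (hi : i ∉ S) :
    valueOn a b (insert i S) = valueOn a b S + a i + ∑ j ∈ S, symmCoeff b i j := by
  have hrow : ∀ p ∈ S, ∑ q ∈ insert i S with p < q, b p q
      = ∑ q ∈ S with p < q, b p q + if p < i then b p i else 0 := by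
    intro p _
    rw [filter_insert]
    split_ifs with hpi
    · rw [sum_insert (by simp [hi]), add_comm]
    · rw [add_zero]
  have hcol : ∑ q ∈ S with i < q, b i q + ∑ p ∈ S, (if p < i then b p i else 0)
      = ∑ j ∈ S, symmCoeff b i j := by
    rw [sum_filter, ← sum_add_distrib]
    refine sum_congr rfl fun j hj => ?_
    rcases lt_or_gt_of_ne (ne_of_mem_of_not_mem hj hi).symm with h | h
    · simp [h, h.not_gt, symmCoeff_of_lt]
    · simp [h, h.not_gt, symmCoeff_comm i j, symmCoeff_of_lt]
  rw [valueOn, valueOn, sum_insert hi, sum_insert hi, filter_insert, if_neg (lt_irrefl i),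
    sum_congr rfl hrow, sum_add_distrib, ← hcol]
  ring

theorem symmCoeff_eq_valueOn_sub {S : Finset ι} {i j : ι} (hi : i ∉ S) (hj : j ∉ S) (hij : i ≠ j) :
    symmCoeff b i j = valueOn a b (insert j (insert i S)) - valueOn a b (insert i S)
      - valueOn a b (insert j S) + valueOn a b S := by
  have hji : j ∉ insert i S := by simp [hj, hij.symm]
  rw [valueOn_insert hji, valueOn_insert hi, valueOn_insert hj, sum_insert hi, symmCoeff_comm j i]
  ring

def VanishesOnLayers (a : ι → ℝ) (b : ι → ι → ℝ) (m : ℕ) : Prop :=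
  ∀ S : Finset ι, #S = m ∨ #S = m + 1 → valueOn a b S = 0

variable {m : ℕ}

theorem VanishesOnLayers.symmCoeff_eq_valueOn (hF : VanishesOnLayers a b m) (hm : 1 ≤ m)
    {S : Finset ι} (hS : #S = m - 1) {i j : ι} (hi : i ∉ S) (hj : j ∉ S) (hij : i ≠ j) :
    symmCoeff b i j = valueOn a b S := by
  have hji : j ∉ insert i S := by simp [hj, hij.symm]
  rw [symmCoeff_eq_valueOn_sub hi hj hij,
    hF _ (.inr (by rw [card_insert_of_notMem hji, card_insert_of_notMem hi]; omega)),
    hF _ (.inl (by rw [card_insert_of_notMem hi]; omega)),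
    hF _ (.inl (by rw [card_insert_of_notMem hj]; omega))]
  ring

variable [Fintype ι]

theorem VanishesOnLayers.symmCoeff_eq_of_ne (hF : VanishesOnLayers a b m) (hm : 1 ≤ m)
    (hcard : m + 2 ≤ Fintype.card ι) {i j k : ι} (hj : j ≠ i) (hk : k ≠ i) :
    symmCoeff b i j = symmCoeff b i k := by
  obtain ⟨S, hdisj, hS⟩ := exists_card_eq_disjoint (m := m - 1) {i, j, k}
    (by have := card_le_three (a := i) (b := j) (c := k); omega)
  have hnot : ∀ x ∈ ({i, j, k} : Finset ι), x ∉ S := fun x hx hxS => disjoint_left.1 hdisj hxS hx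
  by_cases hjk : j = k
  · rw [hjk]
  · rw [hF.symmCoeff_eq_valueOn hm hS (hnot i (by simp)) (hnot j (by simp)) hj.symm,
      hF.symmCoeff_eq_valueOn hm hS (hnot i (by simp)) (hnot k (by simp)) hk.symm]

theorem VanishesOnLayers.coeff_eq_neg_mul (hF : VanishesOnLayers a b m)
    (hcard : m + 1 ≤ Fintype.card ι) {u : ℝ} (hu : ∀ i j, i ≠ j → symmCoeff b i j = u) (k : ι) :
    a k = -(m : ℝ) * u := by
  obtain ⟨S, hdisj, hS⟩ := exists_card_eq_disjoint (m := m) {k} (by simpa using hcard)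
  have hk : k ∉ S := disjoint_singleton_right.1 hdisj
  have hrow : ∑ j ∈ S, symmCoeff b k j = m * u := by
    rw [sum_congr rfl fun j hj => hu k j (ne_of_mem_of_not_mem hj hk).symm, sum_const, hS,
      nsmul_eq_mul]
  have := valueOn_insert (a := a) (b := b) hk
  rw [hF _ (.inl hS), hF _ (.inr (by rw [card_insert_of_notMem hk, hS])), hrow] at this
  linarith

theorem VanishesOnLayers.exists_coeff_eq (hF : VanishesOnLayers a b m) (hm : 1 ≤ m)
    (hcard : m + 2 ≤ Fintype.card ι) :
    ∃ u : ℝ, (∀ i j, i < j → b i j = u) ∧ ∀ i, a i = -(m : ℝ) * u := by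
  obtain ⟨i₀, j₀, h₀⟩ := Fintype.exists_pair_of_one_lt_card (by omega : 1 < Fintype.card ι)
  have hconst : ∀ i j, i ≠ j → symmCoeff b i j = symmCoeff b i₀ j₀ := fun i j hij =>
    eq_of_symm_of_star_eq symmCoeff_comm (fun _ _ _ => hF.symmCoeff_eq_of_ne hm hcard) hij h₀
  refine ⟨symmCoeff b i₀ j₀, fun i j hij => ?_, hF.coeff_eq_neg_mul (by omega) hconst⟩
  rw [← symmCoeff_of_lt (b := b) hij, hconst i j hij.ne]

variable [LocallyFiniteOrderTop ι]

theorem sum_quad_indicator (S : Finset ι) :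
    (∑ i, a i * (if i ∈ S then (1 : ℝ) else 0) ^ 2)
      + ∑ i, ∑ j ∈ Ioi i, b i j * (if i ∈ S then (1 : ℝ) else 0) * (if j ∈ S then 1 else 0)
      = valueOn a b S := by
  have hIoi : ∀ i, Ioi i ∩ S = {j ∈ S | i < j} := fun i => by ext j; simp [and_comm]
  simp [ite_pow, mul_ite, sum_ite_mem, hIoi, valueOn]

end QuadForm01

open QuadForm01 in
/-- Structural step: if the quadratic form `h(x) = ∑ aᵢxᵢ² + ∑_{i<j} aᵢⱼxᵢxⱼ` in `n ≥ 4`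
variables vanishes on all 0/1 points with exactly `m` and exactly `m+1` ones (`m = ⌊n/2⌋`),
then all off-diagonal coefficients equal a common value `u` and each `aᵢ = −m·u`. -/
theorem stmt7 (n : ℕ) (hn : 4 ≤ n) (m : ℕ) (hm : m = n / 2)
    (a : Fin n → ℝ) (b : Fin n → Fin n → ℝ)
    (hvan : ∀ x : Fin n → ℝ, (∀ i, x i = 0 ∨ x i = 1) →
      ((univ.filter fun i => x i = 1).card = m ∨
       (univ.filter fun i => x i = 1).card = m + 1) →
      (∑ i : Fin n, a i * x i ^ 2) + ∑ i : Fin n, ∑ j ∈ Ioi i, b i j * x i * x j = 0) :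
    ∃ u : ℝ, (∀ i j : Fin n, i < j → b i j = u) ∧ ∀ i, a i = -(m : ℝ) * u := by
  have hF : VanishesOnLayers a b m := fun S hS => by
    rw [← sum_quad_indicator]
    refine hvan _ (fun i => by split_ifs <;> simp) ?_
    convert hS using 3 <;> ext i <;> by_cases h : i ∈ S <;> simp [h]
  exact hF.exists_coeff_eq (by omega) (by simp; omega)
end

section
/- For every odd n = 2m+1 with n ≥ 5, the symmetric quartic form L_{2m+1}(x) = m(m+1)·Σ_{i<j}(x_i−x_j)⁴ − (Σ_{i<j}(x_i−x_j)²)² is not a sum of squares of real quadratic forms. -/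
/-!
If `L = ∑ hₜ²`, then every `hₜ` vanishes wherever `L` does, in particular at the indicator
vector of every set with `m` or `m + 1` elements, since there `∑_{i<j} (xᵢ - xⱼ)² = m(m+1)` and
`(xᵢ - xⱼ)⁴ = (xᵢ - xⱼ)²`. Comparing these values of a quadratic form on sets differing in one
element forces all its off-diagonal coefficients to be equal and then all coefficients to vanish,
so every `hₜ = 0`. But `L ≠ 0`: at the indicator of a single coordinate it equals `2m²(m-1)`.
-/

open Finset MvPolynomial

theorem Finset.sum_sum_insert {ι M : Type*} [DecidableEq ι] [AddCommMonoid M] (f : ι → ι → M)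
    {u : ι} {S : Finset ι} (hu : u ∉ S) :
    ∑ i ∈ insert u S, ∑ j ∈ insert u S, f i j =
      ∑ i ∈ S, ∑ j ∈ S, f i j + f u u + ∑ i ∈ S, (f u i + f i u) := by
  simp only [sum_insert hu, sum_add_distrib]
  abel

theorem Finset.sum_sum_mul_indicator_mul_indicator {ι R : Type*} [Fintype ι] [CommSemiring R]
    (A : ι → ι → R) (S : Finset ι) :
    ∑ i, ∑ j, A i j * (S : Set ι).indicator 1 i * (S : Set ι).indicator 1 j =
      ∑ i ∈ S, ∑ j ∈ S, A i j := by
  classical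
  simp [Set.indicator_apply, sum_ite_mem]

theorem Finset.sum_sum_Ioi_sub_sq {α K : Type*} [LinearOrder α] [Fintype α]
    [LocallyFiniteOrderTop α] [LocallyFiniteOrderBot α] [Field K] [CharZero K] (x : α → K) :
    ∑ i, ∑ j ∈ Ioi i, (x i - x j) ^ 2 = Fintype.card α * ∑ i, x i ^ 2 - (∑ i, x i) ^ 2 := by
  classical
  have h := sum_sum_Ioi_add_eq_sum_sum_off_diag fun i j => (x i - x j) ^ 2
  have hpair : ∀ i j, (x j - x i) ^ 2 + (x i - x j) ^ 2 = 2 * (x i - x j) ^ 2 := fun i j => by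
    ring
  have hdiag : ∀ i, ∑ j ∈ {i}ᶜ, (x j - x i) ^ 2 = ∑ j, (x j - x i) ^ 2 := fun i => by
    rw [← sum_compl_add_sum {i}, sum_singleton, sub_self, zero_pow two_ne_zero, add_zero]
  have hfull :
      ∑ i, ∑ j, (x j - x i) ^ 2 = 2 * (Fintype.card α * ∑ i, x i ^ 2 - (∑ i, x i) ^ 2) := by
    simp only [sub_sq, sum_add_distrib, sum_sub_distrib, ← mul_sum, ← sum_mul, sum_const,
      card_univ, nsmul_eq_mul]
    ring
  simp only [hpair, ← mul_sum, hdiag] at h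
  linear_combination (h.trans hfull) / 2

section SymmetricForm

variable {ι K : Type*} [Field K] {B : ι → ι → K} {k : ℕ}

theorem add_two_mul_sum_eq_zero_of_sum_sum_eq_zero (hB : ∀ i j, B i j = B j i)
    (hE : ∀ S : Finset ι, #S = k ∨ #S = k + 1 → ∑ i ∈ S, ∑ j ∈ S, B i j = 0)
    {u : ι} {S : Finset ι} (hu : u ∉ S) (hS : #S = k) :
    B u u + 2 * ∑ i ∈ S, B u i = 0 := by
  classical
  have h := hE (insert u S) (.inr (by rw [card_insert_of_notMem hu, hS]))
  rw [sum_sum_insert B hu, hE S (.inl hS)] at h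
  simp_rw [← hB u, ← two_mul, ← mul_sum] at h
  linear_combination h

theorem apply_eq_apply_of_add_two_mul_sum_eq_zero [Fintype ι] [CharZero K]
    (hB : ∀ i j, B i j = B j i) (hk : 1 ≤ k) (hkι : k + 2 ≤ Fintype.card ι)
    (hrow : ∀ u (S : Finset ι), u ∉ S → #S = k → B u u + 2 * ∑ i ∈ S, B u i = 0)
    {u v u' v' : ι} (huv : u ≠ v) (hu'v' : u' ≠ v') : B u v = B u' v' := by
  classical
  have hrow_const : ∀ u v w, u ≠ v → u ≠ w → B u v = B u w := by
    intro u v w huv huw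
    by_cases hvw : v = w
    · rw [hvw]
    obtain ⟨T, hT, hTcard⟩ := exists_subset_card_eq (s := univ \ {u, v, w}) (n := k - 1) (by
      grw [← le_card_sdiff, card_univ, card_le_three]; omega)
    have huT : u ∉ T := fun h => by simpa using hT h
    have hvT : v ∉ T := fun h => by simpa using hT h
    have hwT : w ∉ T := fun h => by simpa using hT h
    have hv := hrow u (insert v T) (by simp [huv, huT]) (by rw [card_insert_of_notMem hvT]; omega)
    have hw := hrow u (insert w T) (by simp [huw, huT]) (by rw [card_insert_of_notMem hwT]; omega)
    rw [sum_insert hvT] at hv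
    rw [sum_insert hwT] at hw
    linear_combination (hv - hw) / 2
  by_cases hu : u = u'
  · subst hu
    exact hrow_const u v v' huv hu'v'
  calc B u v = B u u' := hrow_const u v u' huv hu
    _ = B u' u := hB u u'
    _ = B u' v' := hrow_const u' u v' (Ne.symm hu) hu'v'

theorem eq_zero_of_sum_sum_eq_zero [Fintype ι] [CharZero K] (hB : ∀ i j, B i j = B j i)
    (hk : 1 ≤ k) (hkι : k + 2 ≤ Fintype.card ι)
    (hE : ∀ S : Finset ι, #S = k ∨ #S = k + 1 → ∑ i ∈ S, ∑ j ∈ S, B i j = 0) (i j : ι) :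
    B i j = 0 := by
  classical
  have hrow u S (hu : u ∉ S) (hS : #S = k) :=
    add_two_mul_sum_eq_zero_of_sum_sum_eq_zero hB hE hu hS
  have hoff {u v u' v'} (huv : u ≠ v) (hu'v' : u' ≠ v') :=
    apply_eq_apply_of_add_two_mul_sum_eq_zero hB hk hkι hrow huv hu'v'
  obtain ⟨u₀, v₀, h₀⟩ := Fintype.exists_pair_of_one_lt_card (by omega : 1 < Fintype.card ι)
  set c := B u₀ v₀
  have hdiag : ∀ u, B u u = -(2 * k * c) := by
    intro u
    obtain ⟨S, hS, hScard⟩ := exists_subset_card_eq (s := univ \ {u}) (n := k) (by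
      rw [card_sdiff_of_subset (subset_univ _), card_univ, card_singleton]; omega)
    have huS : u ∉ S := fun h => by simpa using hS h
    have h := hrow u S huS hScard
    rw [sum_congr rfl fun i hi => hoff (fun h => huS (h ▸ hi) : u ≠ i) h₀, sum_const, hScard,
      nsmul_eq_mul] at h
    linear_combination h
  have hB_eq : ∀ i j, B i j = c + if i = j then -((2 * k + 1) * c) else 0 := by
    intro i j
    split_ifs with h
    · rw [h, hdiag]; ring
    · rw [hoff h h₀, add_zero]
  have hc : c = 0 := by
    obtain ⟨S, -, hScard⟩ := exists_subset_card_eq (s := (univ : Finset ι)) (n := k) (by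
      rw [card_univ]; omega)
    -- on a `k`-set the form equals `k·(k c) - k(2k+1)c = -k(k+1)c`
    have h := hE S (.inl hScard)
    simp only [hB_eq, sum_add_distrib, sum_ite_eq, sum_const, hScard, nsmul_eq_mul] at h
    rw [sum_ite_of_true fun _ hx => hx, sum_const, hScard, nsmul_eq_mul] at h
    have hk0 : (k * (k + 1) : K) ≠ 0 := by exact_mod_cast (by positivity : k * (k + 1) ≠ 0)
    exact (mul_eq_zero.mp (by linear_combination -h : (k * (k + 1) : K) * c = 0)).resolve_left hk0
  rw [hB_eq, hc]
  simp

end SymmetricForm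

namespace MvPolynomial

theorem IsHomogeneous.two_smul_eq_sum_sum_C_mul_X_mul_X {σ R : Type*} [Fintype σ] [CommRing R]
    {q : MvPolynomial σ R} (hq : q.IsHomogeneous 2) :
    2 • q = ∑ i, ∑ j, C (coeff 0 (pderiv j (pderiv i q))) * X i * X j := by
  rw [← hq.sum_X_mul_pderiv]
  refine sum_congr rfl fun i _ => ?_
  have hconst : ∀ j, pderiv j (pderiv i q) = C (coeff 0 (pderiv j (pderiv i q))) := fun j =>
    totalDegree_eq_zero_iff_eq_C.mp <| Nat.le_zero.mp hq.pderiv.pderiv.totalDegree_le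
  have h := (hq.pderiv (i := i)).sum_X_mul_pderiv
  rw [Nat.add_one_sub_one, one_smul] at h
  conv_lhs => rw [← h, mul_sum]
  refine sum_congr rfl fun j _ => ?_
  rw [← hconst j]
  ring

theorem IsHomogeneous.eq_zero_of_eval_indicator_eq_zero {ι K : Type*} [Fintype ι] [Field K]
    [CharZero K] {q : MvPolynomial ι K} (hq : q.IsHomogeneous 2) {k : ℕ} (hk : 1 ≤ k)
    (hkι : k + 2 ≤ Fintype.card ι)
    (hS : ∀ S : Finset ι, #S = k ∨ #S = k + 1 → eval ((S : Set ι).indicator 1) q = 0) :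
    q = 0 := by
  set A : ι → ι → K := fun i j => coeff 0 (pderiv j (pderiv i q))
  have heval : ∀ x, 2 * eval x q = ∑ i, ∑ j, A i j * x i * x j := fun x => by
    simpa [map_sum] using congrArg (eval x) hq.two_smul_eq_sum_sum_C_mul_X_mul_X
  have hA : ∀ x : ι → K, ∑ i, ∑ j, A i j * x i * x j = ∑ i, ∑ j, A j i * x i * x j := fun x => by
    rw [sum_comm]; simp only [mul_right_comm]
  have hsymm : ∀ i j, A i j + A j i = 0 := by
    refine eq_zero_of_sum_sum_eq_zero (fun i j => add_comm _ _) hk hkι fun S hS' => ?_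
    have h := heval ((S : Set ι).indicator 1)
    rw [hS S hS', mul_zero, sum_sum_mul_indicator_mul_indicator] at h
    simp only [sum_add_distrib]
    rw [sum_comm (f := fun i j => A j i), ← h, add_zero]
  refine MvPolynomial.funext fun x => ?_
  have h : 2 * (2 * eval x q) = ∑ i, ∑ j, (A i j + A j i) * x i * x j := by
    simp only [add_mul, sum_add_distrib, ← hA, heval]
    ring
  simp only [hsymm, zero_mul, sum_const_zero] at h
  simpa using h

theorem eval_eq_zero_of_eq_sum_sq {σ ι R : Type*} [Fintype ι] [CommRing R] [LinearOrder R]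
    [IsStrictOrderedRing R] {p : MvPolynomial σ R} {h : ι → MvPolynomial σ R}
    (hp : p = ∑ t, h t ^ 2) {x : σ → R} (hx : eval x p = 0) (t : ι) : eval x (h t) = 0 := by
  rw [hp, map_sum] at hx
  simp only [map_pow] at hx
  exact pow_eq_zero_iff two_ne_zero |>.mp <|
    (sum_eq_zero_iff_of_nonneg fun t _ => sq_nonneg _).mp hx t (mem_univ t)

end MvPolynomial

noncomputable def quarticL (m : ℕ) : MvPolynomial (Fin (2 * m + 1)) ℝ :=
  C (m * (m + 1) : ℝ) * (∑ i : Fin (2 * m + 1), ∑ j ∈ Ioi i, (X i - X j) ^ 4) -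
    (∑ i : Fin (2 * m + 1), ∑ j ∈ Ioi i, (X i - X j) ^ 2) ^ 2

theorem eval_indicator_quarticL (m : ℕ) (S : Finset (Fin (2 * m + 1))) :
    eval ((S : Set (Fin (2 * m + 1))).indicator 1) (quarticL m) =
      #S * (2 * m + 1 - #S) * (m * (m + 1) - #S * (2 * m + 1 - #S)) := by
  set x := (S : Set (Fin (2 * m + 1))).indicator (1 : Fin (2 * m + 1) → ℝ)
  have hx : ∀ i, x i ^ 2 = x i := fun i => by by_cases hi : i ∈ S <;> simp [x, hi]
  have hx4 : ∀ i j, (x i - x j) ^ 4 = (x i - x j) ^ 2 := fun i j => by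
    by_cases hi : i ∈ S <;> by_cases hj : j ∈ S <;> norm_num [x, hi, hj]
  have hsum : ∑ i, x i = #S := by simp [x, Set.indicator_apply]
  have hpairs : ∑ i, ∑ j ∈ Ioi i, (x i - x j) ^ 2 = #S * (2 * m + 1 - #S) := by
    rw [sum_sum_Ioi_sub_sq, Fintype.card_fin, sum_congr rfl fun i _ => hx i, hsum]
    push_cast
    ring
  simp only [quarticL, map_sub, map_mul, map_sum, map_pow, eval_X, eval_C, hx4, hpairs]
  ring

theorem eval_indicator_quarticL_eq_zero {m : ℕ} {S : Finset (Fin (2 * m + 1))}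
    (hS : #S = m ∨ #S = m + 1) :
    eval ((S : Set (Fin (2 * m + 1))).indicator 1) (quarticL m) = 0 := by
  rw [eval_indicator_quarticL]
  rcases hS with hS | hS <;> rw [hS] <;> push_cast <;> ring

theorem quarticL_ne_zero {m : ℕ} (hm : 2 ≤ m) : quarticL m ≠ 0 := by
  intro h
  have h1 := eval_indicator_quarticL m {0}
  rw [h, map_zero, card_singleton, Nat.cast_one] at h1
  have hm' : (1 : ℝ) < m := by exact_mod_cast hm
  have hpos : (0 : ℝ) < m * m * (m - 1) := mul_pos (by positivity) (sub_pos.mpr hm')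
  linarith

/-- For odd `n = 2m+1 ≥ 5`, the symmetric quartic
`L_{2m+1} = m(m+1)·∑_{i<j}(Xᵢ−Xⱼ)⁴ − (∑_{i<j}(Xᵢ−Xⱼ)²)²` is not a sum of squares of
real quadratic forms. -/
theorem stmt9 (m : ℕ) (hm : 2 ≤ m) :
    ¬ ∃ (k : ℕ) (h : Fin k → MvPolynomial (Fin (2 * m + 1)) ℝ),
      (∀ t, (h t).IsHomogeneous 2) ∧
      (C (m * (m + 1) : ℝ)) *
          (∑ i : Fin (2 * m + 1), ∑ j ∈ Ioi i, (X i - X j) ^ 4) -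
        (∑ i : Fin (2 * m + 1), ∑ j ∈ Ioi i, (X i - X j) ^ 2) ^ 2 =
      ∑ t, (h t) ^ 2 := by
  rintro ⟨k, h, hhom, hL⟩
  change quarticL m = _ at hL
  have hzero : ∀ t, h t = 0 := fun t =>
    (hhom t).eq_zero_of_eval_indicator_eq_zero (k := m) (by omega) (by simp; omega) fun S hS =>
      eval_eq_zero_of_eq_sum_sq hL (eval_indicator_quarticL_eq_zero hS) t
  exact quarticL_ne_zero hm (by simp [hL, hzero])
end

section
/- For even n = 2m ≥ 4, the identity L_{2m}(x) = Σ_{i<j}(x_i−x_j)²·(−(x₁+...+x_{2m}) + m(x_i+x_j))² holds; in particular L_{2m} is a sum of squares. -/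
open Finset MvPolynomial

/-!
With `s = ∑ xₗ` and `uᵢ = m xᵢ² - s xᵢ`, the `(i, j)` summand on the right is `(uᵢ - uⱼ)²`.
A symmetric sum over `i < j` with vanishing diagonal is half the full double sum, and the full
double sums of `(yᵢ - yⱼ)²` and `(yᵢ - yⱼ)⁴` are polynomials in the power sums of `y`; so both
sides become the same polynomial in `s, ∑ xᵢ², ∑ xᵢ³, ∑ xᵢ⁴`, once `n = 2m` is substituted.
-/

theorem two_nsmul_sum_sum_Ioi {α M : Type*} [LinearOrder α] [Fintype α]
    [LocallyFiniteOrderTop α] [LocallyFiniteOrderBot α] [AddCommMonoid M] (g : α → α → M)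
    (hsymm : ∀ i j, g i j = g j i) (hdiag : ∀ i, g i i = 0) :
    2 • ∑ i, ∑ j ∈ Ioi i, g i j = ∑ i, ∑ j, g i j := by
  classical
  calc 2 • ∑ i, ∑ j ∈ Ioi i, g i j = ∑ i, ∑ j ∈ Ioi i, (g j i + g i j) := by
        simp only [two_nsmul, ← sum_add_distrib, hsymm]
    _ = ∑ i, ∑ j ∈ {i}ᶜ, g j i := sum_sum_Ioi_add_eq_sum_sum_off_diag g
    _ = ∑ i, ∑ j, g j i := by
        refine sum_congr rfl fun i _ => ?_
        rw [← sum_compl_add_sum {i}, sum_singleton, hdiag, add_zero]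
    _ = ∑ i, ∑ j, g i j := sum_comm

section PowerSums

variable {ι R : Type*} [Fintype ι] [CommRing R] (y : ι → R)

theorem sum_sum_sub_sq :
    ∑ i, ∑ j, (y i - y j) ^ 2 =
      2 * (Fintype.card ι * ∑ i, y i ^ 2 - (∑ i, y i) ^ 2) := by
  simp only [sub_sq, sum_add_distrib, sum_sub_distrib, sum_const, card_univ, nsmul_eq_mul,
    ← mul_sum, ← sum_mul, sq (∑ i, y i)]
  ring

theorem sum_sum_sub_pow_four :
    ∑ i, ∑ j, (y i - y j) ^ 4 =
      2 * Fintype.card ι * ∑ i, y i ^ 4 - 8 * (∑ i, y i) * ∑ i, y i ^ 3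
        + 6 * (∑ i, y i ^ 2) ^ 2 := by
  have expand : ∀ a b : R, (a - b) ^ 4 =
      a ^ 4 - 4 * a ^ 3 * b + 6 * a ^ 2 * b ^ 2 - 4 * a * b ^ 3 + b ^ 4 := fun a b => by ring
  simp only [expand, sum_add_distrib, sum_sub_distrib, sum_const, card_univ, nsmul_eq_mul,
    ← mul_sum, ← sum_mul, sq (∑ i, y i ^ 2)]
  ring

end PowerSums

theorem mul_self_mul_sum_Ioi_pow_four_sub_sq_eq_sum_Ioi_sq {R : Type*} [CommRing R]
    [IsAddTorsionFree R] (m : ℕ) (x : Fin (2 * m) → R) :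
    (m * m : R) * (∑ i, ∑ j ∈ Ioi i, (x i - x j) ^ 4) - (∑ i, ∑ j ∈ Ioi i, (x i - x j) ^ 2) ^ 2 =
      ∑ i, ∑ j ∈ Ioi i, ((x i - x j) * (-(∑ l, x l) + m * (x i + x j))) ^ 2 := by
  have half : ∀ g : Fin (2 * m) → Fin (2 * m) → R, (∀ i j, g i j = g j i) → (∀ i, g i i = 0) →
      2 * ∑ i, ∑ j ∈ Ioi i, g i j = ∑ i, ∑ j, g i j := fun g hsymm hdiag => by
    rw [← two_nsmul_sum_sum_Ioi g hsymm hdiag, nsmul_eq_mul, Nat.cast_ofNat]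
  set s := ∑ l, x l
  set u : Fin (2 * m) → R := fun i => m * x i ^ 2 - s * x i
  have factor : ∀ i j, (x i - x j) * (-s + m * (x i + x j)) = u i - u j := fun i j => by ring
  have hu1 : ∑ i, u i = m * ∑ i, x i ^ 2 - s * s := by
    simp only [u, sum_sub_distrib, ← mul_sum, s]
  have hu2 : ∑ i, u i ^ 2 =
      m ^ 2 * ∑ i, x i ^ 4 - 2 * m * s * ∑ i, x i ^ 3 + s ^ 2 * ∑ i, x i ^ 2 := by
    have expand : ∀ i, u i ^ 2 = m ^ 2 * x i ^ 4 - 2 * m * s * x i ^ 3 + s ^ 2 * x i ^ 2 :=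
      fun i => by ring
    simp only [expand, sum_add_distrib, sum_sub_distrib, ← mul_sum]
  have h4 := half (fun i j => (x i - x j) ^ 4) (fun i j => by ring) (fun i => by ring)
  have h2 := half (fun i j => (x i - x j) ^ 2) (fun i j => by ring) (fun i => by ring)
  have hu := half (fun i j => (u i - u j) ^ 2) (fun i j => by ring) (fun i => by ring)
  simp only [sum_sum_sub_pow_four, sum_sum_sub_sq, Fintype.card_fin, hu1, hu2] at h4 h2 hu
  push_cast at h4 h2 hu
  simp only [factor]
  apply nsmul_right_injective (M := R) (n := 4) four_ne_zero
  simp only [nsmul_eq_mul, Nat.cast_ofNat]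
  linear_combination (2 * (m : R) ^ 2) * h4 - 2 * hu -
    (2 * ∑ i, ∑ j ∈ Ioi i, (x i - x j) ^ 2 + 2 * (2 * m * ∑ i, x i ^ 2 - s ^ 2)) * h2

theorem exists_fin_sum_sq_eq {α R : Type*} [Semiring R] (s : Finset α) (f : α → R) :
    ∃ (k : ℕ) (h : Fin k → R), ∑ a ∈ s, f a ^ 2 = ∑ t, h t ^ 2 :=
  ⟨s.card, fun t => f (s.equivFin.symm t), by
    rw [← sum_coe_sort, ← s.equivFin.symm.sum_comp]⟩

theorem stmt11_general (m : ℕ) :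
    ((C (m * m : ℝ)) * (∑ i : Fin (2 * m), ∑ j ∈ Ioi i, (X i - X j) ^ 4) -
        (∑ i : Fin (2 * m), ∑ j ∈ Ioi i, (X i - X j) ^ 2) ^ 2 =
      ∑ i : Fin (2 * m), ∑ j ∈ Ioi i,
        ((X i - X j) * (-(∑ l : Fin (2 * m), X l) + (C (m : ℝ)) * (X i + X j))) ^ 2) ∧
    ∃ (k : ℕ) (h : Fin k → MvPolynomial (Fin (2 * m)) ℝ),
      (C (m * m : ℝ)) * (∑ i : Fin (2 * m), ∑ j ∈ Ioi i, (X i - X j) ^ 4) -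
        (∑ i : Fin (2 * m), ∑ j ∈ Ioi i, (X i - X j) ^ 2) ^ 2 = ∑ t, (h t) ^ 2 := by
  have identity := mul_self_mul_sum_Ioi_pow_four_sub_sq_eq_sum_Ioi_sq m
    (X : Fin (2 * m) → MvPolynomial (Fin (2 * m)) ℝ)
  rw [← map_natCast C, ← map_mul] at identity
  refine ⟨identity, ?_⟩
  rw [identity, sum_sigma']
  exact exists_fin_sum_sq_eq _ _

/-- For even `n = 2m ≥ 4`, the identity
`L_{2m} = ∑_{i<j} ((Xᵢ−Xⱼ)(−(X₁+⋯+X_{2m}) + m(Xᵢ+Xⱼ)))²` holds;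
in particular `L_{2m}` is a sum of squares. -/
theorem stmt11 (m : ℕ) (hm : 2 ≤ m) :
    ((C (m * m : ℝ)) * (∑ i : Fin (2 * m), ∑ j ∈ Ioi i, (X i - X j) ^ 4) -
        (∑ i : Fin (2 * m), ∑ j ∈ Ioi i, (X i - X j) ^ 2) ^ 2 =
      ∑ i : Fin (2 * m), ∑ j ∈ Ioi i,
        ((X i - X j) * (-(∑ l : Fin (2 * m), X l) + (C (m : ℝ)) * (X i + X j))) ^ 2) ∧
    ∃ (k : ℕ) (h : Fin k → MvPolynomial (Fin (2 * m)) ℝ),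
      (C (m * m : ℝ)) * (∑ i : Fin (2 * m), ∑ j ∈ Ioi i, (X i - X j) ^ 4) -
        (∑ i : Fin (2 * m), ∑ j ∈ Ioi i, (X i - X j) ^ 2) ^ 2 = ∑ t, (h t) ^ 2 :=
  stmt11_general m
end

section
/- The Lax–Lax quartic A₅(x₁,...,x₅) = Σᵢ₌₁⁵ Π_{j≠i}(x_i − x_j) is positive semidefinite on ℝ⁵ but is not a sum of squares of real quadratic forms. -/
/-! Nonnegativity: `A₅` is symmetric, so we may assume `x₁ ≤ ⋯ ≤ x₅`. Then the middle term is
nonnegative, and so is the sum of the two terms at either end, since they share the factor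
`x₂ - x₁` (resp. `x₅ - x₄`) and the remaining factors compare monotonically.

Not a sum of squares: `A₅` vanishes at every `0/1` vector with two or three ones, hence so does
every quadratic form `q` in a representation `A₅ = ∑ qₜ²`. Inclusion–exclusion for quadratic
forms, `q(u+v+w) + q(u) + q(v) + q(w) = q(u+v) + q(v+w) + q(w+u)`, then gives
`q(eᵢ) + q(eⱼ) + q(eₖ) = 0` for all distinct `i, j, k`, hence `q(eᵢ) = 0`, and the parallelogram
law gives `q(eᵢ - eⱼ) = 0`. But `A₅(eᵢ - eⱼ) = 4`. -/

open Finset MvPolynomial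

namespace MvPolynomial

variable {σ R : Type*} [CommRing R] {q : MvPolynomial σ R}

theorem IsHomogeneous.map_eq_zero_of_forall_map_X_mul_X {M : Type*} [AddCommGroup M]
    [Module R M] (hq : q.IsHomogeneous 2) (L : MvPolynomial σ R →ₗ[R] M)
    (hL : ∀ i j, L (X i * X j) = 0) : L q = 0 := by
  have : homogeneousSubmodule σ R 2 ≤ LinearMap.ker L := by
    rw [← homogeneousSubmodule_one_pow, pow_two, homogeneousSubmodule_one_eq_span_X,
      Submodule.span_mul_span, Submodule.span_le]
    rintro _ ⟨_, ⟨i, rfl⟩, _, ⟨j, rfl⟩, rfl⟩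
    exact hL i j
  exact this hq

theorem IsHomogeneous.eval_add_add_add_eval (hq : q.IsHomogeneous 2) (u v w : σ → R) :
    eval (u + v + w) q + (eval u q + eval v q + eval w q) =
      eval (u + v) q + eval (v + w) q + eval (w + u) q := by
  let ev (x : σ → R) := (MvPolynomial.aeval (R := R) x).toLinearMap
  have := hq.map_eq_zero_of_forall_map_X_mul_X
    (ev (u + v + w) + ev u + ev v + ev w - ev (u + v) - ev (v + w) - ev (w + u)) fun i j => by
      simp only [ev, LinearMap.sub_apply, LinearMap.add_apply, AlgHom.toLinearMap_apply,
        aeval_eq_eval, map_mul, eval_X, Pi.add_apply]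
      ring
  simp only [ev, LinearMap.sub_apply, LinearMap.add_apply, AlgHom.toLinearMap_apply,
    aeval_eq_eval] at this
  linear_combination this

theorem IsHomogeneous.eval_add_add_eval_sub (hq : q.IsHomogeneous 2) (u v : σ → R) :
    eval (u + v) q + eval (u - v) q = 2 * (eval u q + eval v q) := by
  let ev (x : σ → R) := (MvPolynomial.aeval (R := R) x).toLinearMap
  have := hq.map_eq_zero_of_forall_map_X_mul_X
    (ev (u + v) + ev (u - v) - (2 : R) • (ev u + ev v)) fun i j => by
      simp only [ev, LinearMap.sub_apply, LinearMap.add_apply, LinearMap.smul_apply,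
        AlgHom.toLinearMap_apply, aeval_eq_eval, smul_eq_mul, map_mul, eval_X, Pi.add_apply,
        Pi.sub_apply]
      ring
  simp only [ev, LinearMap.sub_apply, LinearMap.add_apply, LinearMap.smul_apply,
    AlgHom.toLinearMap_apply, aeval_eq_eval, smul_eq_mul] at this
  linear_combination this

theorem IsHomogeneous.eval_single_sub_single_eq_zero [DecidableEq σ] [Fintype σ] [LinearOrder R]
    [IsStrictOrderedRing R] (hq : q.IsHomogeneous 2) (hσ : 4 ≤ Fintype.card σ)
    (h2 : ∀ i j, i ≠ j → eval (Pi.single i 1 + Pi.single j 1) q = 0)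
    (h3 : ∀ i j k, i ≠ j → i ≠ k → j ≠ k →
      eval (Pi.single i 1 + Pi.single j 1 + Pi.single k 1) q = 0)
    {i j : σ} (hij : i ≠ j) : eval (Pi.single i 1 - Pi.single j 1) q = 0 := by
  set a : σ → R := fun i => eval (Pi.single i 1) q
  have htriple : ∀ i j k, i ≠ j → i ≠ k → j ≠ k → a i + a j + a k = 0 := by
    intro i j k hij hik hjk
    have := hq.eval_add_add_add_eval (Pi.single i 1) (Pi.single j 1) (Pi.single k 1)
    rw [h3 i j k hij hik hjk, h2 i j hij, h2 j k hjk, h2 k i hik.symm] at this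
    linear_combination this
  have hdiag : ∀ i, a i = 0 := by
    intro i
    obtain ⟨p, hp, r, hr, s, hs, hpr, hps, hrs⟩ := two_lt_card.mp
      (by rw [card_erase_of_mem (mem_univ i), card_univ]; omega : 2 < #(univ.erase i))
    have hip := (ne_of_mem_erase hp).symm
    have hir := (ne_of_mem_erase hr).symm
    have his := (ne_of_mem_erase hs).symm
    linarith [htriple i p r hip hir hpr, htriple i p s hip his hps, htriple i r s hir his hrs,
      htriple p r s hpr hps hrs]
  have := hq.eval_add_add_eval_sub (Pi.single i 1) (Pi.single j 1)
  rw [h2 i j hij] at this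
  linear_combination this + 2 * hdiag i + 2 * hdiag j

end MvPolynomial

section LaxLax

variable (ι R : Type*) [Fintype ι] [DecidableEq ι] [CommRing R]

noncomputable def laxLax : MvPolynomial ι R := ∑ i, ∏ j ∈ univ.erase i, (X i - X j)

variable {ι R}

theorem eval_laxLax (x : ι → R) :
    eval x (laxLax ι R) = ∑ i, ∏ j ∈ univ.erase i, (x i - x j) := by
  simp [laxLax]

theorem eval_laxLax_comp_perm (x : ι → R) (τ : Equiv.Perm ι) :
    eval (x ∘ τ) (laxLax ι R) = eval x (laxLax ι R) := by
  simp only [eval_laxLax, Function.comp_apply]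
  refine Eq.trans (sum_congr rfl fun i _ => ?_) (Equiv.sum_comp τ _)
  calc ∏ j ∈ univ.erase i, (x (τ i) - x (τ j))
      = ∏ j ∈ (univ.erase i).map τ.toEmbedding, (x (τ i) - x j) := by
        rw [prod_map]; rfl
    _ = ∏ j ∈ univ.erase (τ i), (x (τ i) - x j) := by rw [map_erase, map_univ_equiv]; rfl

theorem eval_laxLax_eq_zero (x : ι → R) (hx : ∀ i, ∃ j ≠ i, x j = x i) :
    eval x (laxLax ι R) = 0 := by
  rw [eval_laxLax]
  refine sum_eq_zero fun i _ => ?_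
  obtain ⟨j, hji, hj⟩ := hx i
  exact prod_eq_zero (mem_erase.mpr ⟨hji, mem_univ j⟩) (by rw [hj, sub_self])

theorem eval_laxLax_sum_single_eq_zero (S : Finset ι) (hS : 1 < #S) (hSc : 1 < #Sᶜ) :
    eval (∑ k ∈ S, Pi.single k 1) (laxLax ι R) = 0 := by
  refine eval_laxLax_eq_zero _ fun i => ?_
  by_cases hi : i ∈ S
  · obtain ⟨j, hj, hji⟩ := exists_mem_ne hS i
    exact ⟨j, hji, by simp [Finset.sum_apply, Pi.single_apply, hi, hj]⟩
  · obtain ⟨j, hj, hji⟩ := exists_mem_ne hSc i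
    exact ⟨j, hji, by simp_all [Finset.sum_apply, Pi.single_apply]⟩

theorem eval_laxLax_fin_five (x : Fin 5 → R) :
    eval x (laxLax (Fin 5) R) =
      (x 0 - x 1) * (x 0 - x 2) * (x 0 - x 3) * (x 0 - x 4)
        + (x 1 - x 0) * (x 1 - x 2) * (x 1 - x 3) * (x 1 - x 4)
        + (x 2 - x 0) * (x 2 - x 1) * (x 2 - x 3) * (x 2 - x 4)
        + (x 3 - x 0) * (x 3 - x 1) * (x 3 - x 2) * (x 3 - x 4)
        + (x 4 - x 0) * (x 4 - x 1) * (x 4 - x 2) * (x 4 - x 3) := by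
  simp only [eval_laxLax, Fin.sum_univ_five, ← filter_ne', prod_filter, Fin.prod_univ_five]
  simp

theorem eval_laxLax_single_add_single_eq_zero (hι : 4 ≤ Fintype.card ι) {i j : ι} (hij : i ≠ j) :
    eval (Pi.single i 1 + Pi.single j 1) (laxLax ι R) = 0 := by
  rw [← sum_pair (f := fun k => (Pi.single k 1 : ι → R)) hij]
  exact eval_laxLax_sum_single_eq_zero _ (by rw [card_pair hij]; omega)
    (by rw [card_compl, card_pair hij]; omega)

theorem eval_laxLax_single_add_single_add_single_eq_zero (hι : 5 ≤ Fintype.card ι) {i j k : ι}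
    (hij : i ≠ j) (hik : i ≠ k) (hjk : j ≠ k) :
    eval (Pi.single i 1 + Pi.single j 1 + Pi.single k 1) (laxLax ι R) = 0 := by
  have hi : i ∉ ({j, k} : Finset ι) := by simp [hij, hik]
  rw [add_assoc, ← sum_pair (f := fun k => (Pi.single k 1 : ι → R)) hjk,
    ← sum_insert (f := fun k => (Pi.single k 1 : ι → R)) hi]
  exact eval_laxLax_sum_single_eq_zero _ (by rw [card_insert_of_notMem hi, card_pair hjk]; omega)
    (by rw [card_compl, card_insert_of_notMem hi, card_pair hjk]; omega)

end LaxLax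

section Ordered

variable {R : Type*} [CommRing R] [LinearOrder R] [IsStrictOrderedRing R]

theorem laxLax_two_smallest_terms_nonneg {a b c d e : R} (hab : a ≤ b) (hbc : b ≤ c)
    (hbd : b ≤ d) (hbe : b ≤ e) :
    0 ≤ (a - b) * (a - c) * (a - d) * (a - e) + (b - a) * (b - c) * (b - d) * (b - e) := by
  have hprod : (c - b) * (d - b) * (e - b) ≤ (c - a) * (d - a) * (e - a) := by
    gcongr <;> nlinarith
  nlinarith [mul_le_mul_of_nonneg_left hprod (sub_nonneg.mpr hab)]

theorem eval_laxLax_fin_five_nonneg_of_monotone {x : Fin 5 → R} (hx : Monotone x) :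
    0 ≤ eval x (laxLax (Fin 5) R) := by
  have h01 := hx (show (0 : Fin 5) ≤ 1 by decide)
  have h12 := hx (show (1 : Fin 5) ≤ 2 by decide)
  have h23 := hx (show (2 : Fin 5) ≤ 3 by decide)
  have h34 := hx (show (3 : Fin 5) ≤ 4 by decide)
  have hlow := laxLax_two_smallest_terms_nonneg h01 h12 (h12.trans h23) (h12.trans (h23.trans h34))
  -- for `-x` the two largest terms become the two smallest, and each term has even degree
  have hhigh := laxLax_two_smallest_terms_nonneg (neg_le_neg h34) (neg_le_neg h23)
    (neg_le_neg (h12.trans h23)) (neg_le_neg (h01.trans (h12.trans h23)))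
  have hmid : 0 ≤ (x 2 - x 0) * (x 2 - x 1) * ((x 2 - x 3) * (x 2 - x 4)) :=
    mul_nonneg (mul_nonneg (by linarith) (by linarith))
      (mul_nonneg_of_nonpos_of_nonpos (by linarith) (by linarith))
  rw [eval_laxLax_fin_five]
  linear_combination hlow + hhigh + hmid

theorem eval_laxLax_fin_five_nonneg (x : Fin 5 → R) : 0 ≤ eval x (laxLax (Fin 5) R) := by
  rw [← eval_laxLax_comp_perm x (Tuple.sort x)]
  exact eval_laxLax_fin_five_nonneg_of_monotone (Tuple.monotone_sort x)

theorem laxLax_fin_five_not_sum_sq :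
    ¬ ∃ (k : ℕ) (h : Fin k → MvPolynomial (Fin 5) R),
      (∀ t, (h t).IsHomogeneous 2) ∧ laxLax (Fin 5) R = ∑ t, h t ^ 2 := by
  rintro ⟨k, h, hhom, hsum⟩
  have heval : ∀ x, eval x (laxLax (Fin 5) R) = ∑ t, eval x (h t) ^ 2 := by
    simp [hsum]
  have hzero : ∀ x, eval x (laxLax (Fin 5) R) = 0 → ∀ t, eval x (h t) = 0 := by
    intro x hx t
    rw [heval, sum_eq_zero_iff_of_nonneg fun t _ => sq_nonneg _] at hx
    exact pow_eq_zero_iff two_ne_zero |>.mp (hx t (mem_univ t))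
  have hdiff : ∀ t, eval (Pi.single 3 1 - Pi.single 4 1) (h t) = 0 := fun t =>
    (hhom t).eval_single_sub_single_eq_zero (by simp)
      (fun i j hij => hzero _ (eval_laxLax_single_add_single_eq_zero (by simp) hij) t)
      (fun i j k hij hik hjk =>
        hzero _ (eval_laxLax_single_add_single_add_single_eq_zero (by simp) hij hik hjk) t)
      (by decide)
  have hfour : eval (Pi.single 3 1 - Pi.single 4 1) (laxLax (Fin 5) R) = 4 := by
    rw [eval_laxLax_fin_five]
    norm_num [Pi.single_apply, Fin.ext_iff]
  simp [heval, hdiff] at hfour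

end Ordered

/-- The Lax–Lax quartic `A₅ = ∑_{i=1}^{5} ∏_{j≠i} (Xᵢ − Xⱼ)` is positive semidefinite on
`ℝ⁵` but is not a sum of squares of real quadratic forms. -/
theorem stmt15 :
    (∀ x : Fin 5 → ℝ,
      0 ≤ eval x (∑ i : Fin 5, ∏ j ∈ univ.erase i, (X i - X j : MvPolynomial (Fin 5) ℝ))) ∧
    ¬ ∃ (k : ℕ) (h : Fin k → MvPolynomial (Fin 5) ℝ),
      (∀ t, (h t).IsHomogeneous 2) ∧
      (∑ i : Fin 5, ∏ j ∈ univ.erase i, (X i - X j : MvPolynomial (Fin 5) ℝ)) =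
        ∑ t, (h t) ^ 2 :=
  ⟨eval_laxLax_fin_five_nonneg, laxLax_fin_five_not_sum_sq⟩
end

section
/- The Robinson form R(x,y,z) = x⁶+y⁶+z⁶ − (x⁴y² + y⁴z² + z⁴x² + x²y⁴ + y²z⁴ + z²x⁴) + 3x²y²z² is positive semidefinite on ℝ³. -/
lemma schur {a b c : ℝ} (ha : 0 ≤ a) (hb : 0 ≤ b) (hc : 0 ≤ c) :
    0 ≤ a*(a-b)*(a-c) + b*(b-a)*(b-c) + c*(c-a)*(c-b) := by
  rcases le_total a b with hab | hab <;> rcases le_total b c with hbc | hbc <;>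
    rcases le_total a c with hac | hac <;>
    nlinarith [mul_nonneg (sub_nonneg.2 hab) (sub_nonneg.2 hbc),
      sq_nonneg (a-b), sq_nonneg (b-c), sq_nonneg (a-c),
      mul_nonneg ha hb, mul_nonneg hb hc, mul_nonneg ha hc]

/-- The Robinson form
`R(x,y,z) = x⁶+y⁶+z⁶ − (x⁴y²+y⁴z²+z⁴x²+x²y⁴+y²z⁴+z²x⁴) + 3x²y²z²`
is positive semidefinite on `ℝ³`. -/
theorem stmt17 (x y z : ℝ) :
    0 ≤ x^6 + y^6 + z^6
        - (x^4*y^2 + y^4*z^2 + z^4*x^2 + x^2*y^4 + y^2*z^4 + z^2*x^4)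
        + 3*x^2*y^2*z^2 := by
  have h := schur (sq_nonneg x) (sq_nonneg y) (sq_nonneg z)
  nlinarith [h]
end

section
/- The Robinson form R(x,y,z) = x⁶+y⁶+z⁶ − (x⁴y² + y⁴z² + z⁴x² + x²y⁴ + y²z⁴ + z²x⁴) + 3x²y²z² is not a sum of squares of real cubic forms. -/
/-!
If `R = ∑ hₜ²`, every `hₜ` vanishes on the real zeros of `R`. The values of a ternary cubic form
at `(1, 0, 0)` and at eight of those zeros satisfy one linear relation, which it suffices to check
on the ten cubic monomials. Hence every `hₜ` vanishes at `(1, 0, 0)`, whereas `R (1, 0, 0) = 1`.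
-/

open MvPolynomial

namespace MvPolynomial

theorem IsHomogeneous.linearMap_eq_zero {σ R M : Type*} [CommSemiring R] [AddCommMonoid M]
    [Module R M] {p : MvPolynomial σ R} {n : ℕ} (hp : p.IsHomogeneous n)
    (L : MvPolynomial σ R →ₗ[R] M) (hL : ∀ d : σ →₀ ℕ, d.degree = n → L (monomial d 1) = 0) :
    L p = 0 := by
  rw [p.as_sum, map_sum]
  refine Finset.sum_eq_zero fun d _ => ?_
  by_cases hd : d.degree = n
  · rw [← mul_one (coeff d p), ← smul_eq_mul, ← smul_monomial, map_smul, hL d hd, smul_zero]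
  · rw [hp.coeff_eq_zero hd, monomial_zero, map_zero]

theorem eval_sum_sq_eq_zero {ι R σ : Type*} [CommRing R] [LinearOrder R] [IsStrictOrderedRing R]
    {s : Finset ι} {h : ι → MvPolynomial σ R} {v : σ → R}
    (hv : eval v (∑ t ∈ s, h t ^ 2) = 0) {t : ι} (ht : t ∈ s) : eval v (h t) = 0 := by
  simp only [map_sum, map_pow] at hv
  exact pow_eq_zero_iff two_ne_zero |>.mp <|
    (Finset.sum_eq_zero_iff_of_nonneg fun i _ => sq_nonneg _).mp hv t ht

end MvPolynomial

theorem cubic_eval_relation {h : MvPolynomial (Fin 3) ℝ} (hh : h.IsHomogeneous 3) :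
    4 * eval ![1, 0, 0] h
      = - eval ![1, 1, 1] h - eval ![1, 1, -1] h - eval ![1, -1, 1] h + eval ![-1, 1, 1] h
        + 2 * eval ![1, 1, 0] h + 2 * eval ![1, -1, 0] h + 2 * eval ![1, 0, 1] h
        + 2 * eval ![1, 0, -1] h := by
  let ev : (Fin 3 → ℝ) → MvPolynomial (Fin 3) ℝ →ₗ[ℝ] ℝ := fun v => (aeval v).toLinearMap
  have key := hh.linearMap_eq_zero (4 • ev ![1, 0, 0] + ev ![1, 1, 1] + ev ![1, 1, -1]
      + ev ![1, -1, 1] - ev ![-1, 1, 1] - 2 • ev ![1, 1, 0] - 2 • ev ![1, -1, 0]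
      - 2 • ev ![1, 0, 1] - 2 • ev ![1, 0, -1]) fun d hd => by
    rw [Finsupp.degree_eq_sum, Fin.sum_univ_three] at hd
    simp only [ev, LinearMap.sub_apply, LinearMap.add_apply, LinearMap.smul_apply,
      AlgHom.toLinearMap_apply, aeval_monomial, Finsupp.prod_fintype _ _ (fun _ => pow_zero _),
      Fin.prod_univ_three, Matrix.cons_val_zero, Matrix.cons_val_one, Matrix.cons_val_two,
      Matrix.head_cons, Matrix.tail_cons]
    generalize d 0 = a, d 1 = b, d 2 = c at hd ⊢
    obtain ⟨ha, hb, hc⟩ : a ≤ 3 ∧ b ≤ 3 ∧ c ≤ 3 := by omega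
    interval_cases a <;> interval_cases b <;> interval_cases c <;> first | omega | norm_num
  simp only [ev, LinearMap.sub_apply, LinearMap.add_apply, LinearMap.smul_apply,
      AlgHom.toLinearMap_apply, aeval_eq_eval, nsmul_eq_mul, Nat.cast_ofNat] at key
  linarith

noncomputable def robinson : MvPolynomial (Fin 3) ℝ :=
  X 0 ^ 6 + X 1 ^ 6 + X 2 ^ 6
    - (X 0 ^ 4 * X 1 ^ 2 + X 1 ^ 4 * X 2 ^ 2 + X 2 ^ 4 * X 0 ^ 2
       + X 0 ^ 2 * X 1 ^ 4 + X 1 ^ 2 * X 2 ^ 4 + X 2 ^ 2 * X 0 ^ 4)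
    + C 3 * X 0 ^ 2 * X 1 ^ 2 * X 2 ^ 2

theorem eval_robinson (a b c : ℝ) :
    eval ![a, b, c] robinson = a ^ 6 + b ^ 6 + c ^ 6
      - (a ^ 4 * b ^ 2 + b ^ 4 * c ^ 2 + c ^ 4 * a ^ 2 + a ^ 2 * b ^ 4 + b ^ 2 * c ^ 4
         + c ^ 2 * a ^ 4) + 3 * a ^ 2 * b ^ 2 * c ^ 2 := by
  simp [robinson]

theorem eval_one_zero_zero_eq_zero_of_robinson_zeros {h : MvPolynomial (Fin 3) ℝ}
    (hh : h.IsHomogeneous 3) (hz : ∀ v, eval v robinson = 0 → eval v h = 0) :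
    eval ![1, 0, 0] h = 0 := by
  linarith [cubic_eval_relation hh, hz ![1, 1, 1] (by norm_num [eval_robinson]),
    hz ![1, 1, -1] (by norm_num [eval_robinson]), hz ![1, -1, 1] (by norm_num [eval_robinson]),
    hz ![-1, 1, 1] (by norm_num [eval_robinson]), hz ![1, 1, 0] (by norm_num [eval_robinson]),
    hz ![1, -1, 0] (by norm_num [eval_robinson]), hz ![1, 0, 1] (by norm_num [eval_robinson]),
    hz ![1, 0, -1] (by norm_num [eval_robinson])]

/-- The Robinson form is not a sum of squares of real cubic forms. -/
theorem stmt18 :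
    ¬ ∃ (k : ℕ) (h : Fin k → MvPolynomial (Fin 3) ℝ),
      (∀ t, (h t).IsHomogeneous 3) ∧
      (X 0 ^ 6 + X 1 ^ 6 + X 2 ^ 6
          - (X 0 ^ 4 * X 1 ^ 2 + X 1 ^ 4 * X 2 ^ 2 + X 2 ^ 4 * X 0 ^ 2
             + X 0 ^ 2 * X 1 ^ 4 + X 1 ^ 2 * X 2 ^ 4 + X 2 ^ 2 * X 0 ^ 4)
          + (C (3 : ℝ)) * X 0 ^ 2 * X 1 ^ 2 * X 2 ^ 2 : MvPolynomial (Fin 3) ℝ) =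
        ∑ t, (h t) ^ 2 := by
  rintro ⟨k, h, hhom, heq : robinson = _⟩
  have hzero (t) : eval ![1, 0, 0] (h t) = 0 :=
    eval_one_zero_zero_eq_zero_of_robinson_zeros (hhom t) fun v hv =>
      eval_sum_sq_eq_zero (heq ▸ hv) (Finset.mem_univ t)
  have hpos : eval ![1, 0, 0] robinson = 1 := by norm_num [eval_robinson]
  simp [heq, hzero] at hpos
end

section
/- If there exist symmetric psd-not-sos forms in S𝒫_{n,4} \ SΣ_{n,4} for every n ≥ 4 and a symmetric psd-not-sos form in S𝒫_{3,6} \ SΣ_{3,6}, then for all n ≥ 3 and d ≥ 2 with (n,2d) ≠ (3,4), there exists a symmetric psd form of degree 2d in n variables that is not a sum of squares. -/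
open MvPolynomial Finset

variable {n : ℕ}

private lemma eval_aeval' (x : Fin n → ℝ) (u : Fin n → MvPolynomial (Fin n) ℝ)
    (p : MvPolynomial (Fin n) ℝ) :
    eval x (aeval u p) = eval (fun i => eval x (u i)) p := by
  have h1 := MvPolynomial.comp_aeval_apply (f := u) (MvPolynomial.aeval (R := ℝ) x) p
  have h2 : ∀ q : MvPolynomial (Fin n) ℝ, aeval x q = eval x q := fun q =>
    DFunLike.congr_fun (MvPolynomial.coe_aeval_eq_eval x) q
  have h3 : ∀ q : MvPolynomial (Fin n) ℝ,
      aeval (fun i => eval x (u i)) q = eval (fun i => eval x (u i)) q := fun q =>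
    DFunLike.congr_fun (MvPolynomial.coe_aeval_eq_eval _) q
  have h4 : (fun i => aeval (R := ℝ) x (u i)) = (fun i => eval x (u i)) :=
    funext fun i => h2 (u i)
  rw [← h2, h1, ← h3, h4]

private lemma X0_dvd [NeZero n] (p : MvPolynomial (Fin n) ℝ)
    (hp : ∀ x : Fin n → ℝ, x 0 = 0 → eval x p = 0) : X (0 : Fin n) ∣ p := by
  classical
  set a : MvPolynomial (Fin n) ℝ :=
    ∑ m ∈ p.support.filter (fun m => m 0 = 0), monomial m (coeff m p) with ha
  set b : MvPolynomial (Fin n) ℝ :=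
    ∑ m ∈ p.support.filter (fun m => ¬ m 0 = 0), monomial m (coeff m p) with hbdef
  have hb : X (0 : Fin n) ∣ b := by
    apply Finset.dvd_sum
    intro m hm
    rw [X_dvd_monomial]
    exact Or.inr (Finset.mem_filter.mp hm).2
  have hab : a + b = p := by
    rw [ha, hbdef, Finset.sum_filter_add_sum_filter_not]
    exact (as_sum p).symm
  have key : ∀ y : Fin n → ℝ, eval y a = eval (Function.update y 0 0) a := by
    intro y
    rw [ha, map_sum, map_sum]
    refine Finset.sum_congr rfl fun m hm => ?_
    rw [eval_monomial, eval_monomial]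
    congr 1
    apply Finsupp.prod_congr
    intro i hi
    have hi0 : i ≠ 0 := by
      rintro rfl
      exact (Finsupp.mem_support_iff.mp hi) (Finset.mem_filter.mp hm).2
    rw [Function.update_of_ne hi0]
  have ha0 : a = 0 := by
    apply MvPolynomial.funext
    intro y
    have h1 : Function.update y (0 : Fin n) (0:ℝ) 0 = 0 := Function.update_self _ _ _
    obtain ⟨c, hc⟩ := hb
    have hbe : eval (Function.update y 0 0) b = 0 := by
      rw [hc, map_mul, eval_X, h1, zero_mul]
    have hpe : eval (Function.update y 0 0) p = 0 := hp _ h1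
    have := congrArg (eval (Function.update y 0 0)) hab
    rw [map_add, hbe, add_zero, hpe] at this
    rw [key y, this, map_zero]
  rw [← hab, ha0, zero_add]
  exact hb

private lemma ell_dvd [NeZero n] (p : MvPolynomial (Fin n) ℝ)
    (hp : ∀ x : Fin n → ℝ, (∑ i, x i) = 0 → eval x p = 0) :
    (∑ i, X i : MvPolynomial (Fin n) ℝ) ∣ p := by
  classical
  set s : MvPolynomial (Fin n) ℝ := ∑ i ∈ Finset.univ.erase 0, X i with hs
  set τ : MvPolynomial (Fin n) ℝ →ₐ[ℝ] MvPolynomial (Fin n) ℝ :=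
    aeval (Function.update X (0 : Fin n) (X 0 + s)) with hτ
  set σf : MvPolynomial (Fin n) ℝ →ₐ[ℝ] MvPolynomial (Fin n) ℝ :=
    aeval (Function.update X (0 : Fin n) (X 0 - s)) with hσ
  have hτs : τ s = s := by
    rw [hs, map_sum]
    refine Finset.sum_congr rfl fun i hi => ?_
    rw [hτ, aeval_X, Function.update_of_ne (Finset.ne_of_mem_erase hi)]
  have hτσ : ∀ q, τ (σf q) = q := by
    have : τ.comp σf = AlgHom.id ℝ _ := by
      apply MvPolynomial.algHom_ext
      intro i
      by_cases h : i = 0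
      · subst h
        simp only [AlgHom.comp_apply, AlgHom.id_apply]
        rw [show σf (X 0) = X 0 - s by rw [hσ, aeval_X, Function.update_self]]
        rw [map_sub, hτs, show τ (X 0) = X 0 + s by rw [hτ, aeval_X, Function.update_self]]
        ring
      · simp only [AlgHom.comp_apply, AlgHom.id_apply]
        rw [show σf (X i) = X i by rw [hσ, aeval_X, Function.update_of_ne h]]
        rw [hτ, aeval_X, Function.update_of_ne h]
    intro q
    exact DFunLike.congr_fun this q
  have hvan : ∀ x : Fin n → ℝ, x 0 = 0 → eval x (σf p) = 0 := by
    intro x hx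
    rw [hσ, eval_aeval']
    apply hp
    have h0 : eval x (Function.update X (0 : Fin n) (X 0 - s) 0)
        = x 0 - ∑ i ∈ Finset.univ.erase 0, x i := by
      rw [Function.update_self, map_sub, eval_X, hs, map_sum]
      simp [eval_X]
    have hne : ∀ i : Fin n, i ≠ 0 →
        eval x (Function.update X (0 : Fin n) (X 0 - s) i) = x i := by
      intro i hi
      rw [Function.update_of_ne hi, eval_X]
    rw [← Finset.add_sum_erase _ _ (Finset.mem_univ (0 : Fin n))]
    rw [h0, Finset.sum_congr rfl (fun i hi => hne i (Finset.ne_of_mem_erase hi)), hx]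
    ring
  obtain ⟨r, hr⟩ := X0_dvd (σf p) hvan
  refine ⟨τ r, ?_⟩
  have hℓ : τ (X 0) = ∑ i, X i := by
    rw [hτ, aeval_X, Function.update_self, hs, Finset.add_sum_erase _ _ (Finset.mem_univ 0)]
  rw [← hτσ p, hr, map_mul, hℓ]

private lemma cancel_sq [NeZero n] (f : MvPolynomial (Fin n) ℝ) (k : ℕ)
    (h : Fin k → MvPolynomial (Fin n) ℝ)
    (heq : f * (∑ i, X i : MvPolynomial (Fin n) ℝ) ^ 2 = ∑ t, (h t) ^ 2) :
    ∃ g : Fin k → MvPolynomial (Fin n) ℝ, f = ∑ t, (g t) ^ 2 := by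
  have hvan : ∀ t, ∀ x : Fin n → ℝ, (∑ i, x i) = 0 → eval x (h t) = 0 := by
    intro t x hx
    have h1 : ∑ t, (eval x (h t)) ^ 2 = 0 := by
      have := congrArg (eval x) heq
      rw [map_mul, map_pow, map_sum] at this
      rw [map_sum] at this
      simp only [eval_X] at this
      rw [hx] at this
      simpa using this.symm
    have h2 := (Finset.sum_eq_zero_iff_of_nonneg
      (fun t _ => sq_nonneg (eval x (h t)))).mp h1 t (Finset.mem_univ t)
    exact (pow_eq_zero_iff two_ne_zero).mp h2
  choose g hg using fun t => ell_dvd (h t) (hvan t)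
  have hℓ : (∑ i, X i : MvPolynomial (Fin n) ℝ) ≠ 0 := by
    intro h0
    have := congrArg (eval (fun _ : Fin n => (1 : ℝ))) h0
    rw [map_sum, map_zero] at this
    simp only [eval_X] at this
    rw [Finset.sum_const, Finset.card_univ, Fintype.card_fin, nsmul_eq_mul, mul_one] at this
    exact (Nat.cast_ne_zero.mpr (NeZero.ne n)) this
  refine ⟨g, mul_right_cancel₀ (pow_ne_zero 2 hℓ) ?_⟩
  rw [heq, Finset.sum_mul]
  refine Finset.sum_congr rfl fun t _ => ?_
  rw [hg t]; ring

private lemma cancel_pow [NeZero n] (m : ℕ) (f : MvPolynomial (Fin n) ℝ)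
    (hsos : ∃ (k : ℕ) (h : Fin k → MvPolynomial (Fin n) ℝ),
      f * (∑ i, X i : MvPolynomial (Fin n) ℝ) ^ (2 * m) = ∑ t, (h t) ^ 2) :
    ∃ (k : ℕ) (h : Fin k → MvPolynomial (Fin n) ℝ), f = ∑ t, (h t) ^ 2 := by
  induction m with
  | zero =>
    obtain ⟨k, h, hk⟩ := hsos
    rw [mul_zero, pow_zero, mul_one] at hk
    exact ⟨k, h, hk⟩
  | succ m ih =>
    obtain ⟨k, h, hk⟩ := hsos
    have : (f * (∑ i, X i : MvPolynomial (Fin n) ℝ) ^ (2 * m)) *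
        (∑ i, X i : MvPolynomial (Fin n) ℝ) ^ 2 = ∑ t, (h t) ^ 2 := by
      rw [← hk]; ring
    obtain ⟨g, hg⟩ := cancel_sq _ k h this
    exact ih ⟨k, g, hg⟩

private lemma symPow {p : MvPolynomial (Fin n) ℝ} (hp : p.IsSymmetric) (k : ℕ) :
    (p ^ k).IsSymmetric := by
  induction k with
  | zero => rw [pow_zero]; exact MvPolynomial.IsSymmetric.one
  | succ j ihj => rw [pow_succ]; exact ihj.mul hp

private lemma bump [NeZero n] (e m : ℕ) (f0 : MvPolynomial (Fin n) ℝ)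
    (hsym : f0.IsSymmetric) (hhom : f0.IsHomogeneous e)
    (hpsd : ∀ x : Fin n → ℝ, 0 ≤ eval x f0)
    (hnsos : ¬ ∃ (k : ℕ) (h : Fin k → MvPolynomial (Fin n) ℝ), f0 = ∑ t, (h t) ^ 2) :
    ∃ f : MvPolynomial (Fin n) ℝ,
      f.IsSymmetric ∧ f.IsHomogeneous (e + 2 * m) ∧ (∀ x : Fin n → ℝ, 0 ≤ eval x f) ∧
      ¬ ∃ (k : ℕ) (h : Fin k → MvPolynomial (Fin n) ℝ), f = ∑ t, (h t) ^ 2 := by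
  set ℓ : MvPolynomial (Fin n) ℝ := ∑ i, X i with hℓdef
  have hℓsym : ℓ.IsSymmetric := by
    intro eqv
    rw [hℓdef, map_sum]
    simp only [rename_X]
    exact Fintype.sum_equiv eqv _ _ fun i => rfl
  have hℓhom : ℓ.IsHomogeneous 1 := by
    apply MvPolynomial.IsHomogeneous.sum
    intro i _
    exact isHomogeneous_X _ _
  refine ⟨f0 * ℓ ^ (2 * m), ?_, ?_, ?_, ?_⟩
  · exact hsym.mul (symPow hℓsym (2 * m))
  · have h1 := hhom.mul (hℓhom.pow (2 * m))
    rwa [one_mul] at h1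
  · intro x
    rw [map_mul, map_pow]
    exact mul_nonneg (hpsd x) (Even.pow_nonneg ⟨m, by ring⟩ _)
  · intro hc
    exact hnsos (cancel_pow m f0 hc)

/-- If there exist symmetric psd-not-sos quartic forms in every number `n ≥ 4` of variables
and a symmetric psd-not-sos ternary sextic, then for all `n ≥ 3`, `d ≥ 2` with
`(n,2d) ≠ (3,4)` there exists a symmetric psd form of degree `2d` in `n` variables that is
not a sum of squares. -/
theorem stmt19
    (h4 : ∀ n : ℕ, 4 ≤ n → ∃ f : MvPolynomial (Fin n) ℝ,
      f.IsSymmetric ∧ f.IsHomogeneous 4 ∧ (∀ x : Fin n → ℝ, 0 ≤ eval x f) ∧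
      ¬ ∃ (k : ℕ) (h : Fin k → MvPolynomial (Fin n) ℝ), f = ∑ t, (h t) ^ 2)
    (h36 : ∃ f : MvPolynomial (Fin 3) ℝ,
      f.IsSymmetric ∧ f.IsHomogeneous 6 ∧ (∀ x : Fin 3 → ℝ, 0 ≤ eval x f) ∧
      ¬ ∃ (k : ℕ) (h : Fin k → MvPolynomial (Fin 3) ℝ), f = ∑ t, (h t) ^ 2) :
    ∀ n d : ℕ, 3 ≤ n → 2 ≤ d → ¬(n = 3 ∧ 2 * d = 4) →
      ∃ f : MvPolynomial (Fin n) ℝ,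
        f.IsSymmetric ∧ f.IsHomogeneous (2 * d) ∧ (∀ x : Fin n → ℝ, 0 ≤ eval x f) ∧
        ¬ ∃ (k : ℕ) (h : Fin k → MvPolynomial (Fin n) ℝ), f = ∑ t, (h t) ^ 2 := by
  intro n d hn hd hne
  haveI : NeZero n := ⟨by omega⟩
  by_cases h3 : n = 3
  · subst h3
    have hd3 : 3 ≤ d := by omega
    obtain ⟨f0, hsym, hhom, hpsd, hnsos⟩ := h36
    have := bump 6 (d - 3) f0 hsym hhom hpsd hnsos
    rwa [show 6 + 2 * (d - 3) = 2 * d by omega] at this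
  · have h4n : 4 ≤ n := by omega
    obtain ⟨f0, hsym, hhom, hpsd, hnsos⟩ := h4 n h4n
    have := bump 4 (d - 2) f0 hsym hhom hpsd hnsos
    rwa [show 4 + 2 * (d - 2) = 2 * d by omega] at this
end
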